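/- arXiv:2501.09581 — 8 statements merged into one kernel-verified Lean document; each statement's English description precedes it below -/
import Mathlib

section
/- If F is an exposed extreme ray of a closed convex cone K in a finite-dimensional Euclidean space, then the conjugate face F^Δ = K* ∩ F^⊥ is a maximal proper face of the dual cone K*. -/
open scoped RealInnerProductSpace

variable {E : Type*} [NormedAddCommGroup E] [InnerProductSpace ℝ E] [FiniteDimensional ℝ E]

/-- `F` is a face of the convex cone `K`. -/
def IsFace (K F : Set E) : Prop :=
  F.Nonempty ∧ Convex ℝ F ∧ (∀ x ∈ F, ∀ c : ℝ, 0 ≤ c → c • x ∈ F) ∧ F ⊆ K ∧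
    ∀ x ∈ K, ∀ y ∈ K, x + y ∈ F → x ∈ F ∧ y ∈ F

/-- The dual cone of `K`. -/
def dualCone (K : Set E) : Set E := {y | ∀ x ∈ K, 0 ≤ ⟪x, y⟫}

/-- The conjugate face `F^Δ = K* ∩ F^⊥`. -/
def conjFace (K F : Set E) : Set E := dualCone K ∩ {y | ∀ x ∈ F, ⟪x, y⟫ = 0}

lemma zero_mem_dualCone (K : Set E) : (0 : E) ∈ dualCone K := by
  intro x _; simp

lemma dualCone_convex (K : Set E) : Convex ℝ (dualCone K) := by
  intro y1 hy1 y2 hy2 a b ha hb _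
  intro x hx
  rw [inner_add_right, real_inner_smul_right, real_inner_smul_right]
  have := hy1 x hx
  have := hy2 x hx
  positivity

lemma dualCone_cone (K : Set E) : ∀ y ∈ dualCone K, ∀ c : ℝ, 0 ≤ c → c • y ∈ dualCone K := by
  intro y hy c hc x hx
  rw [real_inner_smul_right]
  exact mul_nonneg hc (hy x hx)

/-- Bipolar theorem: for a nonempty closed convex cone, the double dual is itself. -/
lemma bipolar_subset (K : Set E) (hne : K.Nonempty) (hcl : IsClosed K) (hcv : Convex ℝ K)
    (hcone : ∀ x ∈ K, ∀ c : ℝ, 0 ≤ c → c • x ∈ K) :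
    dualCone (dualCone K) ⊆ K := by
  have hadd : ∀ a ∈ K, ∀ b ∈ K, a + b ∈ K := by
    intro a ha b hb
    have hh := hcv ha hb (by norm_num : (0:ℝ) ≤ 1/2) (by norm_num : (0:ℝ) ≤ 1/2)
      (by norm_num : (1/2 : ℝ) + 1/2 = 1)
    have h2 := hcone _ hh 2 (by norm_num)
    have he : (2:ℝ) • ((1/2 : ℝ) • a + (1/2 : ℝ) • b) = a + b := by
      rw [smul_add, smul_smul, smul_smul]; norm_num
    rwa [he] at h2
  set KC : ConvexCone ℝ E :=
    { carrier := K
      smul_mem' := fun c hc x hx => hcone x hx c hc.le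
      add_mem' := fun x hx y hy => hadd x hx y hy } with hKC
  intro z hz
  by_contra hzK
  obtain ⟨f, u, hfa, hfz⟩ := geometric_hahn_banach_closed_point hcv hcl hzK
  obtain ⟨k0, hk0⟩ := hne
  have h0K : (0:E) ∈ K := by simpa using hcone k0 hk0 0 le_rfl
  have hu : 0 < u := by simpa using hfa 0 h0K
  have hfle : ∀ a ∈ K, f a ≤ 0 := by
    intro a ha
    by_contra hpos
    push_neg at hpos
    have := hfa _ (hcone a ha (u / f a) (by positivity))
    rw [map_smul, smul_eq_mul, div_mul_cancel₀ _ hpos.ne'] at this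
    exact lt_irrefl _ this
  set w : E := (InnerProductSpace.toDual ℝ E).symm f
  have hwz : ∀ y : E, ⟪w, y⟫ = f y := fun y => InnerProductSpace.toDual_symm_apply
  have hw : -w ∈ dualCone K := by
    intro a ha
    rw [inner_neg_right, real_inner_comm, hwz]
    linarith [hfle a ha]
  have := hz (-w) hw
  rw [inner_neg_left, hwz] at this
  linarith

/-- A face of a cone is closed under nonnegative linear combinations. -/
lemma face_sum_mem {C G : Set E} (hG : IsFace C G) :
    ∀ s : Finset E, ↑s ⊆ G → ∀ f : E → ℝ, (∀ b ∈ s, 0 ≤ f b) → (∑ b ∈ s, f b • b) ∈ G := by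
  classical
  obtain ⟨g0, hg0⟩ := hG.1
  have h0G : (0 : E) ∈ G := by simpa using hG.2.2.1 g0 hg0 0 le_rfl
  have hadd : ∀ a ∈ G, ∀ b ∈ G, a + b ∈ G := by
    intro a ha b hb
    have hh := hG.2.1 ha hb (by norm_num : (0:ℝ) ≤ 1/2) (by norm_num : (0:ℝ) ≤ 1/2)
      (by norm_num : (1/2 : ℝ) + 1/2 = 1)
    have h2 := hG.2.2.1 _ hh 2 (by norm_num)
    have he : (2:ℝ) • ((1/2 : ℝ) • a + (1/2 : ℝ) • b) = a + b := by
      rw [smul_add, smul_smul, smul_smul]; norm_num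
    rwa [he] at h2
  intro s
  induction s using Finset.induction_on with
  | empty => intro _ f _; simpa using h0G
  | @insert a s ha ih =>
      intro hsub f hf
      rw [Finset.sum_insert ha]
      refine hadd _ (hG.2.2.1 a (hsub (Finset.mem_insert_self a s)) _
        (hf a (Finset.mem_insert_self a s))) _ ?_
      exact ih (fun b hb => hsub (Finset.mem_insert_of_mem hb)) f
        fun b hb => hf b (Finset.mem_insert_of_mem hb)

/-- The heart: a proper face of the dual cone admits a nonzero supporting vector in the
double dual orthogonal to the face. -/
lemma exists_orth_vector (K : Set E) (G : Set E) (hG : IsFace (dualCone K) G)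
    (hne : G ≠ dualCone K) :
    ∃ u : E, u ≠ 0 ∧ u ∈ dualCone (dualCone K) ∧ ∀ g ∈ G, ⟪g, u⟫ = 0 := by
  set C := dualCone K with hC
  have hCcv : Convex ℝ C := dualCone_convex K
  have hCcone := dualCone_cone K
  have h0C : (0 : E) ∈ C := zero_mem_dualCone K
  have hGC : G ⊆ C := hG.2.2.2.1
  obtain ⟨g0, hg0⟩ := hG.1
  have h0G : (0 : E) ∈ G := by simpa using hG.2.2.1 g0 hg0 0 le_rfl
  -- a relative interior point of G
  obtain ⟨t, htG, htspan, htli⟩ := exists_linearIndependent ℝ G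
  have htfin : t.Finite := htli.set_finite_of_isNoetherian
  set s := htfin.toFinset with hs
  have hsG : ↑s ⊆ G := by rw [hs, Set.Finite.coe_toFinset]; exact htG
  set x : E := ∑ b ∈ s, b with hx
  have hxG : x ∈ G := by
    have := face_sum_mem hG s hsG (fun _ => (1:ℝ)) (fun _ _ => zero_le_one)
    simpa using this
  have hrelint : ∀ g ∈ G, ∃ ε : ℝ, 0 < ε ∧ x - ε • g ∈ G := by
    intro g hg
    have hgspan : g ∈ Submodule.span ℝ (↑s : Set E) := by
      rw [hs, Set.Finite.coe_toFinset, htspan]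
      exact Submodule.subset_span hg
    obtain ⟨f, -, hf⟩ := Submodule.mem_span_finset.mp hgspan
    set M : ℝ := ∑ b ∈ s, |f b| with hM
    have hM0 : 0 ≤ M := Finset.sum_nonneg fun b _ => abs_nonneg _
    refine ⟨(M + 1)⁻¹, by positivity, ?_⟩
    have hxg : x - (M + 1)⁻¹ • g = ∑ b ∈ s, (1 - (M + 1)⁻¹ * f b) • b := by
      rw [hx, ← hf, Finset.smul_sum, ← Finset.sum_sub_distrib]
      refine Finset.sum_congr rfl fun b hb => ?_
      rw [sub_smul, one_smul, smul_smul]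
    rw [hxg]
    refine face_sum_mem hG s hsG _ fun b hb => ?_
    have habs : |f b| ≤ M := Finset.single_le_sum (fun c _ => abs_nonneg (f c)) hb
    have hfb : f b ≤ M + 1 := by
      calc f b ≤ |f b| := le_abs_self _
        _ ≤ M + 1 := by linarith
    have hpos : (0:ℝ) < M + 1 := by linarith
    have : (M + 1)⁻¹ * f b ≤ (M + 1)⁻¹ * (M + 1) :=
      mul_le_mul_of_nonneg_left hfb (by positivity)
    rw [inv_mul_cancel₀ (ne_of_gt hpos)] at this
    linarith
  by_cases hxint : x ∈ interior C
  · -- then G = C, contradiction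
    exfalso
    apply hne
    refine Set.Subset.antisymm hGC fun c hc => ?_
    have hcont : Continuous fun δ : ℝ => x - δ • c := by continuity
    have hopen := (isOpen_interior (s := C)).preimage hcont
    have h0mem : (0:ℝ) ∈ (fun δ : ℝ => x - δ • c) ⁻¹' interior C := by
      simpa using hxint
    obtain ⟨ε, hε, hball⟩ := Metric.isOpen_iff.mp hopen 0 h0mem
    set δ : ℝ := ε / 2 with hδ
    have hδ0 : 0 < δ := by positivity
    have hδball : δ ∈ Metric.ball (0:ℝ) ε := by
      rw [Metric.mem_ball, Real.dist_eq, sub_zero, abs_of_pos hδ0]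
      linarith
    have hmem : x - δ • c ∈ C := interior_subset (hball hδball)
    have hsum : (x - δ • c) + δ • c ∈ G := by
      have : (x - δ • c) + δ • c = x := by abel
      rw [this]; exact hxG
    have hδc : δ • c ∈ G :=
      (hG.2.2.2.2 (x - δ • c) hmem (δ • c) (hCcone c hc δ hδ0.le) hsum).2
    have := hG.2.2.1 _ hδc δ⁻¹ (by positivity)
    rwa [smul_smul, inv_mul_cancel₀ (ne_of_gt hδ0), one_smul] at this
  by_cases hint : (interior C).Nonempty
  · -- separation
    obtain ⟨a₀, ha₀⟩ := hint
    obtain ⟨f, hf⟩ := geometric_hahn_banach_open_point (hCcv.interior) isOpen_interior hxint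
    have hle : ∀ c ∈ C, f c ≤ f x := by
      intro c hc
      by_contra hlt
      push_neg at hlt
      have ha0 := hf a₀ ha₀
      set d : ℝ := f c - f a₀ with hd
      have hd0 : 0 < d := by linarith
      set tt : ℝ := (f c - f x) / (2 * d) with htt
      have hnum : 0 < f c - f x := by linarith
      have htt0 : 0 < tt := by positivity
      have httd : tt * d = (f c - f x) / 2 := by
        rw [htt]; field_simp
      have htt1 : tt ≤ 1 := by
        nlinarith [httd]
      have hp : tt • a₀ + (1 - tt) • c ∈ interior C :=
        hCcv.combo_interior_self_mem_interior ha₀ hc htt0 (by linarith) (by ring)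
      have hfp := hf _ hp
      rw [map_add, map_smul, map_smul, smul_eq_mul, smul_eq_mul] at hfp
      nlinarith [httd, hfp]
    have hfx0 : f x = 0 := by
      have h1 : (0:ℝ) ≤ f x := by
        have := hle 0 h0C
        simpa using this
      have h2 : f x ≤ 0 := by
        have h2x : (2:ℝ) • x ∈ C := hCcone x (hGC hxG) 2 (by norm_num)
        have := hle _ h2x
        rw [map_smul, smul_eq_mul] at this
        linarith
      linarith
    have hfneg : ∀ c ∈ C, f c ≤ 0 := fun c hc => by
      have := hle c hc; linarith
    set w : E := (InnerProductSpace.toDual ℝ E).symm f with hw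
    have hwz : ∀ z : E, ⟪w, z⟫ = f z := fun z => InnerProductSpace.toDual_symm_apply
    refine ⟨-w, ?_, ?_, ?_⟩
    · intro hw0
      have hweq : w = 0 := by
        have := neg_eq_zero.mp hw0
        exact this
      have : f a₀ < f x := hf a₀ ha₀
      rw [hfx0] at this
      have hfa : f a₀ = 0 := by
        rw [← hwz a₀, hweq, inner_zero_left]
      linarith
    · intro y hy
      rw [inner_neg_right, real_inner_comm, hwz]
      have := hfneg y hy
      linarith
    · intro g hg
      have hg1 : f g ≤ 0 := hfneg g (hGC hg)
      obtain ⟨ε, hε0, hεG⟩ := hrelint g hg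
      have hg2 : f (x - ε • g) ≤ 0 := hfneg _ (hGC hεG)
      rw [map_sub, map_smul, smul_eq_mul, hfx0] at hg2
      have hfg : f g = 0 := by nlinarith
      rw [inner_neg_right, real_inner_comm, hwz, hfg, neg_zero]
  · -- interior empty: C is not full-dimensional
    have hspan : Submodule.span ℝ C ≠ ⊤ := by
      intro htop
      apply hint
      rw [hCcv.interior_nonempty_iff_affineSpan_eq_top]
      apply AffineSubspace.coe_injective
      have hins : insert (0:E) C = C := Set.insert_eq_self.mpr h0C
      rw [AffineSubspace.top_coe, ← hins, affineSpan_insert_zero, htop]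
      simp
    have horth : (Submodule.span ℝ C)ᗮ ≠ ⊥ := fun h =>
      hspan (Submodule.orthogonal_eq_bot_iff.mp h)
    obtain ⟨u, hu, hu0⟩ := Submodule.ne_bot_iff _ |>.mp horth
    have hcu : ∀ c ∈ C, ⟪c, u⟫ = 0 := fun c hc =>
      (Submodule.mem_orthogonal _ u).mp hu c (Submodule.subset_span hc)
    exact ⟨u, hu0, fun y hy => le_of_eq (hcu y hy).symm, fun g hg => hcu g (hGC hg)⟩

/-- If `F` is an exposed extreme ray of a closed convex cone `K` in a finite-dimensional
Euclidean space, then the conjugate face `F^Δ = K* ∩ F^⊥` is a maximal proper face of the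
dual cone `K*`. -/
theorem stmt0 (K : Set E) (hKcl : IsClosed K) (hKcv : Convex ℝ K)
    (hKcone : ∀ x ∈ K, ∀ c : ℝ, 0 ≤ c → c • x ∈ K)
    (F : Set E) (hF : IsFace K F)
    (hexp : ∃ y ∈ dualCone K, F = K ∩ {x | ⟪x, y⟫ = 0})
    (hray : ∃ v : E, v ≠ 0 ∧ v ∈ K ∧ F = {x | ∃ c : ℝ, 0 ≤ c ∧ x = c • v}) :
    IsFace (dualCone K) (conjFace K F) ∧ conjFace K F ≠ dualCone K ∧
      ∀ G : Set E, IsFace (dualCone K) G → conjFace K F ⊆ G → G ≠ dualCone K →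
        G = conjFace K F := by
  obtain ⟨v, hv0, hvK, hFv⟩ := hray
  obtain ⟨w, hwK, hFw⟩ := hexp
  have hKne : K.Nonempty := ⟨v, hvK⟩
  have hFK : F ⊆ K := hF.2.2.2.1
  have hvF : v ∈ F := by rw [hFv]; exact ⟨1, zero_le_one, (one_smul ℝ v).symm⟩
  have hbip := bipolar_subset K hKne hKcl hKcv hKcone
  -- Part 1 : conjFace is a face of dualCone K
  have hface : IsFace (dualCone K) (conjFace K F) := by
    refine ⟨⟨0, zero_mem_dualCone K, fun x _ => by simp⟩, ?_, ?_, Set.inter_subset_left, ?_⟩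
    · intro y1 hy1 y2 hy2 a b ha hb hab
      refine ⟨dualCone_convex K hy1.1 hy2.1 ha hb hab, fun x hx => ?_⟩
      rw [inner_add_right, real_inner_smul_right, real_inner_smul_right,
        hy1.2 x hx, hy2.2 x hx]
      ring
    · intro y hy c hc
      refine ⟨dualCone_cone K y hy.1 c hc, fun x hx => ?_⟩
      rw [real_inner_smul_right, hy.2 x hx, mul_zero]
    · intro y1 hy1 y2 hy2 hsum
      have key : ∀ x ∈ F, ⟪x, y1⟫ = 0 ∧ ⟪x, y2⟫ = 0 := by
        intro x hx
        have h1 : 0 ≤ ⟪x, y1⟫ := hy1 x (hFK hx)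
        have h2 : 0 ≤ ⟪x, y2⟫ := hy2 x (hFK hx)
        have h3 : ⟪x, y1⟫ + ⟪x, y2⟫ = 0 := by
          rw [← inner_add_right]; exact hsum.2 x hx
        constructor <;> linarith
      exact ⟨⟨hy1, fun x hx => (key x hx).1⟩, ⟨hy2, fun x hx => (key x hx).2⟩⟩
  -- Part 2 : properness
  have hproper : conjFace K F ≠ dualCone K := by
    intro heq
    have hvy : ∀ y ∈ dualCone K, ⟪v, y⟫ = 0 := by
      intro y hy
      have : y ∈ conjFace K F := heq ▸ hy
      exact this.2 v hvF
    have hnegv : -v ∈ K := by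
      apply hbip
      intro y hy
      rw [inner_neg_right, real_inner_comm, hvy y hy, neg_zero]
    have h0F : (0:E) ∈ F := by
      rw [hFv]; exact ⟨0, le_rfl, (zero_smul ℝ v).symm⟩
    have hsum : v + (-v) ∈ F := by rw [add_neg_cancel]; exact h0F
    have hnvF : -v ∈ F := (hF.2.2.2.2 v hvK (-v) hnegv hsum).2
    rw [hFv] at hnvF
    obtain ⟨c, hc0, hcv⟩ := hnvF
    have : (c + 1) • v = 0 := by
      rw [add_smul, one_smul, ← hcv]; abel
    have hc1 : c + 1 ≠ 0 := by positivity
    exact hv0 (by simpa [hc1] using smul_eq_zero.mp this)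
  refine ⟨hface, hproper, ?_⟩
  -- Part 3 : maximality
  intro G hG hsubG hGne
  obtain ⟨u, hu0, hudd, hugo⟩ := exists_orth_vector K G hG hGne
  have huK : u ∈ K := hbip hudd
  -- w ∈ conjFace K F ⊆ G
  have hwconj : w ∈ conjFace K F := by
    refine ⟨hwK, fun x hx => ?_⟩
    rw [hFw] at hx
    exact hx.2
  have hwG : w ∈ G := hsubG hwconj
  have huw : ⟪u, w⟫ = 0 := by
    rw [real_inner_comm]; exact hugo w hwG
  have huF : u ∈ F := by
    rw [hFw]; exact ⟨huK, huw⟩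
  rw [hFv] at huF
  obtain ⟨c, hc0, hcu⟩ := huF
  have hcpos : 0 < c := by
    rcases hc0.lt_or_eq with h | h
    · exact h
    · exfalso; apply hu0; rw [hcu, ← h, zero_smul]
  have hgv : ∀ g ∈ G, ⟪v, g⟫ = 0 := by
    intro g hg
    have := hugo g hg
    rw [hcu, real_inner_smul_right] at this
    have : ⟪g, v⟫ = 0 := by
      rcases mul_eq_zero.mp this with h | h
      · exact absurd h (ne_of_gt hcpos)
      · exact h
    rw [real_inner_comm]; exact this
  refine Set.Subset.antisymm ?_ hsubG
  intro g hg
  refine ⟨hG.2.2.2.1 hg, fun x hx => ?_⟩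
  rw [hFv] at hx
  obtain ⟨c', _, rfl⟩ := hx
  rw [real_inner_smul_left, hgv g hg, mul_zero]
end

section
/- Let K be a closed convex cone in a finite-dimensional Euclidean space, F a face of K, and x ∈ K. Then F is the minimal face of K containing x if and only if x lies in the relative interior of F. -/
variable {E : Type*} [NormedAddCommGroup E] [InnerProductSpace ℝ E] [FiniteDimensional ℝ E]

/-- If `x` lies in the intrinsic interior of `s` and `y ∈ s`, one can move past `x`
along the ray from `y` through `x` while staying in `s`. -/
lemma pushPast_aux {s : Set E} {x y : E}
    (hx : x ∈ intrinsicInterior ℝ s) (hy : y ∈ s) :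
    ∃ z ∈ s, x ∈ openSegment ℝ y z := by
  obtain ⟨x', hx'int, hx'⟩ := mem_intrinsicInterior.mp hx
  have hxs : x ∈ s := intrinsicInterior_subset hx
  have hxspan : x ∈ affineSpan ℝ s := subset_affineSpan ℝ s hxs
  have hyspan : y ∈ affineSpan ℝ s := subset_affineSpan ℝ s hy
  have hmem : ∀ t : ℝ, x + t • (x - y) ∈ affineSpan ℝ s := by
    intro t
    have := (affineSpan ℝ s).smul_vsub_vadd_mem t hxspan hyspan hxspan
    simpa [vsub_eq_sub, vadd_eq_add, add_comm] using this
  set γ : ℝ → affineSpan ℝ s := fun t => ⟨x + t • (x - y), hmem t⟩ with hγ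
  have hcont : Continuous γ := by
    apply Continuous.subtype_mk
    fun_prop
  have hU : IsOpen (γ ⁻¹' (interior (Subtype.val ⁻¹' s))) :=
    isOpen_interior.preimage hcont
  have h0 : (0 : ℝ) ∈ γ ⁻¹' (interior (Subtype.val ⁻¹' s)) := by
    have hx'' : x' = γ 0 := by
      apply Subtype.ext
      simp [hγ, hx']
    simpa [← hx''] using hx'int
  obtain ⟨ε, hε, hball⟩ := Metric.isOpen_iff.mp hU 0 h0
  set t : ℝ := ε / 2 with ht
  have htpos : 0 < t := by positivity
  have htmem : t ∈ γ ⁻¹' (interior (Subtype.val ⁻¹' s)) := by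
    apply hball
    simp only [Metric.mem_ball, Real.dist_eq, sub_zero]
    rw [abs_of_pos htpos]
    linarith
  have hz' : γ t ∈ Subtype.val ⁻¹' s := interior_subset htmem
  have hz : x + t • (x - y) ∈ s := hz' 
  refine ⟨x + t • (x - y), hz, ?_⟩
  refine ⟨t / (1 + t), 1 / (1 + t), by positivity, by positivity, ?_, ?_⟩
  · have h1t : (1 : ℝ) + t ≠ 0 := by positivity
    field_simp
    ring
  · have h1t : (1 : ℝ) + t ≠ 0 := by positivity
    match_scalars <;> field_simp <;> ring

/-- An open combination of an intrinsic interior point and a point of a convex set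
lies in the intrinsic interior. -/
lemma combo_mem_intrinsicInterior {s : Set E} (hs : Convex ℝ s) {z w : E}
    (hz : z ∈ s) (hw : w ∈ intrinsicInterior ℝ s) {t : ℝ} (ht0 : 0 < t) (ht1 : t < 1) :
    t • w + (1 - t) • z ∈ intrinsicInterior ℝ s := by
  obtain ⟨w', hw'int, hw'⟩ := mem_intrinsicInterior.mp hw
  have hws : w ∈ s := intrinsicInterior_subset hw
  have hwspan : w ∈ affineSpan ℝ s := subset_affineSpan ℝ s hws
  have hzspan : z ∈ affineSpan ℝ s := subset_affineSpan ℝ s hz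
  have hxspan : t • w + (1 - t) • z ∈ affineSpan ℝ s := by
    have := (affineSpan ℝ s).smul_vsub_vadd_mem t hwspan hzspan hzspan
    have heq : t • (w - z) + z = t • w + (1 - t) • z := by module
    simpa [vsub_eq_sub, vadd_eq_add, heq] using this
  have hmemψ : ∀ v : affineSpan ℝ s, t⁻¹ • ((v : E) - z) + z ∈ affineSpan ℝ s := by
    intro v
    have := (affineSpan ℝ s).smul_vsub_vadd_mem t⁻¹ v.2 hzspan hzspan
    simpa [vsub_eq_sub, vadd_eq_add] using this
  set ψ : affineSpan ℝ s → affineSpan ℝ s :=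
    fun v => ⟨t⁻¹ • ((v : E) - z) + z, hmemψ v⟩ with hψ
  have hcont : Continuous ψ := by
    apply Continuous.subtype_mk
    fun_prop
  have hsub : ψ ⁻¹' (interior (Subtype.val ⁻¹' s)) ⊆ Subtype.val ⁻¹' s := by
    intro v hv
    have h1' : ψ v ∈ Subtype.val ⁻¹' s := interior_subset hv
    have h1 : t⁻¹ • ((v : E) - z) + z ∈ s := h1' 
    have h2 : t • (t⁻¹ • ((v : E) - z) + z) + (1 - t) • z ∈ s :=
      hs h1 hz (le_of_lt ht0) (by linarith) (by ring)
    have heq : t • (t⁻¹ • ((v : E) - z) + z) + (1 - t) • z = (v : E) := by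
      rw [smul_add, smul_smul, mul_inv_cancel₀ (ne_of_gt ht0)]
      module
    rwa [heq] at h2
  refine mem_intrinsicInterior.mpr ⟨⟨t • w + (1 - t) • z, hxspan⟩, ?_, rfl⟩
  apply interior_maximal hsub (isOpen_interior.preimage hcont)
  show ψ ⟨t • w + (1 - t) • z, hxspan⟩ ∈ interior (Subtype.val ⁻¹' s)
  have hψx : ψ ⟨t • w + (1 - t) • z, hxspan⟩ = w' := by
    apply Subtype.ext
    simp only [hψ, hw']
    have : (t • w + (1 - t) • z) - z = t • (w - z) := by module
    rw [this, smul_smul, inv_mul_cancel₀ (ne_of_gt ht0)]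
    module
  rw [hψx]
  exact hw'int

/-- Let `K` be a closed convex cone in a finite-dimensional Euclidean space, `F` a face of
`K`, and `x ∈ K`.  Then `F` is the minimal face of `K` containing `x` (the intersection of
all faces of `K` containing `x`) if and only if `x` lies in the relative interior of `F`. -/
theorem stmt1 (K : Set E) (hKcl : IsClosed K) (hKcv : Convex ℝ K)
    (hKcone : ∀ x ∈ K, ∀ c : ℝ, 0 ≤ c → c • x ∈ K)
    (F : Set E) (hF : IsFace K F) (x : E) (hx : x ∈ K) :
    F = ⋂₀ {G : Set E | IsFace K G ∧ x ∈ G} ↔ x ∈ intrinsicInterior ℝ F := by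
  obtain ⟨hFne, hFcv, hFcone, hFK, hFface⟩ := hF
  -- K is closed under addition
  have haddK : ∀ u ∈ K, ∀ v ∈ K, u + v ∈ K := by
    intro u hu v hv
    have h := hKcv hu hv (by norm_num : (0:ℝ) ≤ 1/2) (by norm_num : (0:ℝ) ≤ 1/2) (by norm_num)
    have h2 := hKcone _ h 2 (by norm_num)
    have : (2:ℝ) • ((1/2 : ℝ) • u + (1/2 : ℝ) • v) = u + v := by module
    rwa [this] at h2
  have h0K : (0 : E) ∈ K := by simpa using hKcone x hx 0 le_rfl
  -- if x - λ y ∈ K and 0 ≤ μ ≤ λ and y ∈ K, then x - μ y ∈ K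
  have hshrink : ∀ y ∈ K, ∀ lam mu : ℝ, 0 ≤ mu → mu ≤ lam → x - lam • y ∈ K → x - mu • y ∈ K := by
    intro y hy lam mu hmu hle hK'
    have h1 : (lam - mu) • y ∈ K := hKcone y hy _ (by linarith)
    have := haddK _ hK' _ h1
    have heq : (x - lam • y) + (lam - mu) • y = x - mu • y := by module
    rwa [heq] at this
  -- the candidate minimal face
  set Fx : Set E := {y | y ∈ K ∧ ∃ lam : ℝ, 0 < lam ∧ x - lam • y ∈ K} with hFx
  have hxFx : x ∈ Fx := ⟨hx, 1, one_pos, by simpa using h0K⟩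
  have haddFx : ∀ u ∈ Fx, ∀ v ∈ Fx, u + v ∈ Fx := by
    rintro u ⟨huK, lu, hlu, hu⟩ v ⟨hvK, lv, hlv, hv⟩
    refine ⟨haddK _ huK _ hvK, min lu lv / 2, by positivity, ?_⟩
    have h1 : x - min lu lv • u ∈ K :=
      hshrink u huK lu _ (le_of_lt (lt_min hlu hlv)) (min_le_left _ _) hu
    have h2 : x - min lu lv • v ∈ K :=
      hshrink v hvK lv _ (le_of_lt (lt_min hlu hlv)) (min_le_right _ _) hv
    have h3 := hKcv h1 h2 (by norm_num : (0:ℝ) ≤ 1/2) (by norm_num : (0:ℝ) ≤ 1/2) (by norm_num)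
    have heq : (1/2 : ℝ) • (x - min lu lv • u) + (1/2 : ℝ) • (x - min lu lv • v)
        = x - (min lu lv / 2) • (u + v) := by module
    rwa [heq] at h3
  have hconeFx : ∀ y ∈ Fx, ∀ c : ℝ, 0 ≤ c → c • y ∈ Fx := by
    rintro y ⟨hyK, lam, hlam, hy⟩ c hc
    refine ⟨hKcone y hyK c hc, lam / (c + 1), by positivity, ?_⟩
    have hmu : x - (lam * c / (c + 1)) • y ∈ K := by
      apply hshrink y hyK lam _ (by positivity) _ hy
      rw [div_le_iff₀ (by positivity)]
      nlinarith
    have heq : x - (lam * c / (c + 1)) • y = x - (lam / (c + 1)) • (c • y) := by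
      rw [smul_smul]; ring_nf
    rwa [heq] at hmu
  have hcvFx : Convex ℝ Fx := by
    intro u hu v hv a b ha hb hab
    exact haddFx _ (hconeFx u hu a ha) _ (hconeFx v hv b hb)
  have hfaceFx : ∀ u ∈ K, ∀ v ∈ K, u + v ∈ Fx → u ∈ Fx ∧ v ∈ Fx := by
    rintro u hu v hv ⟨_, lam, hlam, hsum⟩
    constructor
    · refine ⟨hu, lam, hlam, ?_⟩
      have := haddK _ hsum _ (hKcone v hv lam (le_of_lt hlam))
      have heq : (x - lam • (u + v)) + lam • v = x - lam • u := by module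
      rwa [heq] at this
    · refine ⟨hv, lam, hlam, ?_⟩
      have := haddK _ hsum _ (hKcone u hu lam (le_of_lt hlam))
      have heq : (x - lam • (u + v)) + lam • u = x - lam • v := by module
      rwa [heq] at this
  have hFxIsFace : IsFace K Fx :=
    ⟨⟨x, hxFx⟩, hcvFx, hconeFx, fun y hy => hy.1, hfaceFx⟩
  have hmin : ∀ G : Set E, IsFace K G → x ∈ G → Fx ⊆ G := by
    rintro G ⟨_, _, hGcone, hGK, hGface⟩ hxG y ⟨hyK, lam, hlam, hy⟩
    have h1 : lam • y ∈ K := hKcone y hyK lam (le_of_lt hlam)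
    have h2 : (x - lam • y) + lam • y ∈ G := by simpa using hxG
    have h3 : lam • y ∈ G := (hGface _ hy _ h1 h2).2
    have h4 := hGcone _ h3 lam⁻¹ (by positivity)
    rwa [smul_smul, inv_mul_cancel₀ (ne_of_gt hlam), one_smul] at h4
  have hInter : ⋂₀ {G : Set E | IsFace K G ∧ x ∈ G} = Fx := by
    apply Set.Subset.antisymm
    · exact Set.sInter_subset_of_mem ⟨hFxIsFace, hxFx⟩
    · intro y hy G hG
      exact hmin G hG.1 hG.2 hy
  rw [hInter]
  constructor
  · rintro rfl
    -- show x ∈ intrinsicInterior ℝ Fx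
    obtain ⟨w, hw⟩ := Set.Nonempty.intrinsicInterior hcvFx ⟨x, hxFx⟩
    obtain ⟨hwK, lam, hlam, hxw⟩ := intrinsicInterior_subset hw
    set t : ℝ := min lam (1/2) with htdef
    have ht0 : 0 < t := lt_min hlam (by norm_num)
    have ht1 : t < 1 := lt_of_le_of_lt (min_le_right _ _) (by norm_num)
    have hxtw : x - t • w ∈ K := hshrink w hwK lam t (le_of_lt ht0) (min_le_left _ _) hxw
    have hxtwFx : x - t • w ∈ Fx := by
      have htwK : t • w ∈ K := hKcone w hwK t (le_of_lt ht0)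
      have : (x - t • w) + t • w ∈ Fx := by simpa using hxFx
      exact (hfaceFx _ hxtw _ htwK this).1
    have hzFx : (1 - t)⁻¹ • (x - t • w) ∈ Fx :=
      hconeFx _ hxtwFx _ (le_of_lt (inv_pos.mpr (by linarith)))
    have hcombo := combo_mem_intrinsicInterior hcvFx hzFx hw ht0 ht1
    have heq : t • w + (1 - t) • ((1 - t)⁻¹ • (x - t • w)) = x := by
      rw [smul_smul, mul_inv_cancel₀ (ne_of_gt (by linarith : (0:ℝ) < 1 - t)), one_smul]
      module
    rwa [heq] at hcombo
  · intro hxint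
    have hxF : x ∈ F := intrinsicInterior_subset hxint
    apply Set.Subset.antisymm
    · intro y hy
      obtain ⟨z, hz, a, b, ha, hb, hab, heq⟩ := pushPast_aux hxint hy
      refine ⟨hFK hy, a, ha, ?_⟩
      have : x - a • y = b • z := by rw [← heq]; module
      rw [this]
      exact hKcone z (hFK hz) b (le_of_lt hb)
    · exact hmin F ⟨hFne, hFcv, hFcone, hFK, hFface⟩ hxF
end

section
/- Let K be a closed convex cone and F a face of K. For every x in the relative interior of F, the conjugate face F^Δ = K* ∩ F^⊥ equals K* ∩ {x}^⊥. -/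
open scoped RealInnerProductSpace

variable {E : Type*} [NormedAddCommGroup E] [InnerProductSpace ℝ E] [FiniteDimensional ℝ E]

/-- From a point in the intrinsic interior one can move slightly past it away from any
point of the set while staying in the set. -/
lemma exists_extend {F : Set E} {x z : E} (hx : x ∈ intrinsicInterior ℝ F) (hz : z ∈ F) :
    ∃ ε : ℝ, 0 < ε ∧ x + ε • (x - z) ∈ F := by
  rw [mem_intrinsicInterior] at hx
  obtain ⟨x', hx'int, rfl⟩ := hx
  have hzS : z ∈ affineSpan ℝ F := subset_affineSpan ℝ F hz
  -- the curve t ↦ lineMap z x t, inside the affine span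
  have hmem : ∀ t : ℝ, (AffineMap.lineMap z (x' : E) : ℝ →ᵃ[ℝ] E) t ∈ affineSpan ℝ F := by
    intro t
    have := AffineSubspace.smul_vsub_vadd_mem (affineSpan ℝ F) t x'.2 hzS hzS
    simpa [AffineMap.lineMap_apply, vsub_eq_sub, vadd_eq_add] using this
  let c : ℝ → affineSpan ℝ F := fun t => ⟨(AffineMap.lineMap z (x' : E) : ℝ →ᵃ[ℝ] E) t, hmem t⟩
  have hc : Continuous c := by
    apply Continuous.subtype_mk
    exact (AffineMap.lineMap z (x' : E) : ℝ →ᵃ[ℝ] E).continuous_of_finiteDimensional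
  have hopen : IsOpen (c ⁻¹' interior ((↑) ⁻¹' F : Set (affineSpan ℝ F))) :=
    isOpen_interior.preimage hc
  have h1 : (1 : ℝ) ∈ c ⁻¹' interior ((↑) ⁻¹' F : Set (affineSpan ℝ F)) := by
    have : c 1 = x' := by
      apply Subtype.ext
      simp [c, AffineMap.lineMap_apply_one]
    simpa [Set.mem_preimage, this] using hx'int
  obtain ⟨δ, hδ, hball⟩ := Metric.isOpen_iff.1 hopen 1 h1
  refine ⟨δ / 2, by positivity, ?_⟩
  have ht : (1 + δ / 2) ∈ Metric.ball (1 : ℝ) δ := by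
    simp only [Metric.mem_ball, Real.dist_eq]
    rw [abs_of_nonneg (by linarith)]
    linarith
  have hF' := interior_subset (hball ht)
  have : AffineMap.lineMap z (x' : E) (1 + δ / 2) ∈ F := hF'
  have heq : AffineMap.lineMap z (x' : E) (1 + δ / 2) = (x' : E) + (δ / 2) • ((x' : E) - z) := by
    simp only [AffineMap.lineMap_apply, vsub_eq_sub, vadd_eq_add]
    module
  rwa [heq] at this

/-- Let `K` be a closed convex cone and `F` a face of `K`.  For every `x` in the relative
interior of `F`, the conjugate face `F^Δ = K* ∩ F^⊥` equals `K* ∩ {x}^⊥`. -/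
theorem stmt2 (K : Set E) (hKcl : IsClosed K) (hKcv : Convex ℝ K)
    (hKcone : ∀ x ∈ K, ∀ c : ℝ, 0 ≤ c → c • x ∈ K)
    (F : Set E) (hF : IsFace K F) (x : E) (hx : x ∈ intrinsicInterior ℝ F) :
    dualCone K ∩ {y | ∀ z ∈ F, ⟪z, y⟫ = 0} = dualCone K ∩ {y | ⟪x, y⟫ = 0} := by
  obtain ⟨hFne, hFcv, hFcone, hFK, hface⟩ := hF
  have hxF : x ∈ F := intrinsicInterior_subset hx
  ext y
  simp only [Set.mem_inter_iff, Set.mem_setOf_eq]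
  constructor
  · rintro ⟨hyK, hyF⟩
    exact ⟨hyK, hyF x hxF⟩
  · rintro ⟨hyK, hxy⟩
    refine ⟨hyK, fun z hz => ?_⟩
    obtain ⟨ε, hε, hw⟩ := exists_extend hx hz
    have h1 : 0 ≤ ⟪z, y⟫ := hyK z (hFK hz)
    have h2 : 0 ≤ ⟪x + ε • (x - z), y⟫ := hyK _ (hFK hw)
    have h3 : ⟪x + ε • (x - z), y⟫ = (1 + ε) * ⟪x, y⟫ - ε * ⟪z, y⟫ := by
      rw [inner_add_left, inner_smul_left, inner_sub_left]
      ring_nf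
      simp [RCLike.ofReal_real_eq_id]
      ring
    rw [h3, hxy] at h2
    nlinarith
end

section
/- Let K be a pointed closed convex cone in a finite-dimensional Euclidean space. If every face of K is orthogonally projectionally exposed (i.e., for every face F there is a self-adjoint idempotent linear map P with P(K) = F), then K ⊆ K*. -/
set_option linter.unusedSectionVars false
set_option maxHeartbeats 1000000

open scoped RealInnerProductSpace
open Submodule Module Filter

variable {E : Type*} [NormedAddCommGroup E] [InnerProductSpace ℝ E] [FiniteDimensional ℝ E]

/-- Bundle of all hypotheses on the cone. -/
def GoodCone (K : Set E) : Prop :=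
  K.Nonempty ∧ IsClosed K ∧ Convex ℝ K ∧ (∀ x ∈ K, ∀ c : ℝ, 0 ≤ c → c • x ∈ K) ∧
    (K ∩ (-K) ⊆ {0}) ∧
    ∀ F : Set E, IsFace K F → ∃ P : E →ₗ[ℝ] E,
      P ∘ₗ P = P ∧ (∀ x y : E, ⟪P x, y⟫ = ⟪x, P y⟫) ∧ P '' K = F

lemma cone_zero_mem {K : Set E} (hne : K.Nonempty)
    (hcone : ∀ x ∈ K, ∀ c : ℝ, 0 ≤ c → c • x ∈ K) : (0 : E) ∈ K := by
  obtain ⟨x, hx⟩ := hne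
  simpa using hcone x hx 0 le_rfl

lemma cone_add_mem {K : Set E} (hcv : Convex ℝ K)
    (hcone : ∀ x ∈ K, ∀ c : ℝ, 0 ≤ c → c • x ∈ K)
    {x y : E} (hx : x ∈ K) (hy : y ∈ K) : x + y ∈ K := by
  have h := hcv hx hy (by norm_num : (0:ℝ) ≤ 1/2) (by norm_num : (0:ℝ) ≤ 1/2) (by norm_num)
  have h2 := hcone _ h 2 (by norm_num)
  have : (2:ℝ) • ((1/2 : ℝ) • x + (1/2 : ℝ) • y) = x + y := by
    rw [smul_add, smul_smul, smul_smul]; norm_num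
  rwa [this] at h2

/-- The face generated by `z`. -/
def genFace (K : Set E) (z : E) : Set E := {w ∈ K | ∃ μ : ℝ, 0 ≤ μ ∧ μ • z - w ∈ K}

lemma isFace_genFace {K : Set E} (hne : K.Nonempty) (hcv : Convex ℝ K)
    (hcone : ∀ x ∈ K, ∀ c : ℝ, 0 ≤ c → c • x ∈ K) {z : E} (hz : z ∈ K) :
    IsFace K (genFace K z) := by
  have h0 : (0:E) ∈ K := cone_zero_mem hne hcone
  refine ⟨⟨z, hz, 1, zero_le_one, by simpa using h0⟩, ?_, ?_, fun w hw => hw.1, ?_⟩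
  · rintro w₁ ⟨hw₁, μ₁, hμ₁, hK₁⟩ w₂ ⟨hw₂, μ₂, hμ₂, hK₂⟩ a b ha hb hab
    refine ⟨hcv hw₁ hw₂ ha hb hab, a * μ₁ + b * μ₂, by positivity, ?_⟩
    have := hcv hK₁ hK₂ ha hb hab
    have heq : a • (μ₁ • z - w₁) + b • (μ₂ • z - w₂)
        = (a * μ₁ + b * μ₂) • z - (a • w₁ + b • w₂) := by
      simp only [smul_sub, smul_smul, add_smul]; abel
    rwa [heq] at this
  · rintro w ⟨hw, μ, hμ, hK⟩ c hc
    refine ⟨hcone w hw c hc, c * μ, by positivity, ?_⟩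
    have := hcone _ hK c hc
    rwa [smul_sub, smul_smul] at this
  · rintro x hx y hy ⟨hxy, μ, hμ, hK⟩
    have hx' : x ∈ genFace K z := by
      refine ⟨hx, μ, hμ, ?_⟩
      have h' : μ • z - (x + y) + y ∈ K := cone_add_mem hcv hcone hK hy
      have h2 : μ • z - (x + y) + y = μ • z - x := by abel
      rwa [h2] at h'
    have hy' : y ∈ genFace K z := by
      refine ⟨hy, μ, hμ, ?_⟩
      have h' : μ • z - (x + y) + x ∈ K := cone_add_mem hcv hcone hK hx
      have h2 : μ • z - (x + y) + x = μ • z - y := by abel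
      rwa [h2] at h'
    exact ⟨hx', hy'⟩

lemma isFace_trans {K F G : Set E} (hF : IsFace K F) (hG : IsFace F G) : IsFace K G := by
  obtain ⟨hFne, hFcv, hFcone, hFK, hFface⟩ := hF
  obtain ⟨hGne, hGcv, hGcone, hGF, hGface⟩ := hG
  refine ⟨hGne, hGcv, hGcone, hGF.trans hFK, ?_⟩
  intro x hx y hy hxy
  have hxyF : x ∈ F ∧ y ∈ F := hFface x hx y hy (hGF hxy)
  exact hGface x hxyF.1 y hxyF.2 hxy

/-- A projectionally exposed face: each of its points is fixed by `P`. -/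
lemma face_fix {K F : Set E} {P : E →ₗ[ℝ] E} (hP2 : P ∘ₗ P = P) (himg : P '' K = F)
    {f : E} (hf : f ∈ F) : P f = f := by
  rw [← himg] at hf
  obtain ⟨k, _, rfl⟩ := hf
  have := DFunLike.congr_fun hP2 k
  simpa using this

lemma face_closed {K F : Set E} (hKcl : IsClosed K) (hFK : F ⊆ K)
    {P : E →ₗ[ℝ] E} (hP2 : P ∘ₗ P = P) (himg : P '' K = F) : IsClosed F := by
  have : F = K ∩ (LinearMap.range P : Set E) := by
    ext z
    constructor
    · intro hz
      refine ⟨hFK hz, ?_⟩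
      rw [← himg] at hz
      obtain ⟨k, _, rfl⟩ := hz
      exact ⟨k, rfl⟩
    · rintro ⟨hzK, w, rfl⟩
      have : P (P w) ∈ F := by rw [← himg]; exact ⟨P w, hzK, rfl⟩
      rwa [show P (P w) = P w from by simpa using DFunLike.congr_fun hP2 w] at this
  rw [this]
  exact hKcl.inter (Submodule.closed_of_finiteDimensional _)

lemma cone_finsum_mem {F : Set E} (h0 : (0:E) ∈ F)
    (hadd : ∀ a ∈ F, ∀ b ∈ F, a + b ∈ F)
    (hcone : ∀ x ∈ F, ∀ c : ℝ, 0 ≤ c → c • x ∈ F)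
    (T : Finset E) (hT : ↑T ⊆ F) (g : E → ℝ) (hg : ∀ i ∈ T, 0 ≤ g i) :
    ∑ i ∈ T, g i • i ∈ F := by
  classical
  induction T using Finset.induction with
  | empty => simpa using h0
  | @insert a s ha ih =>
      rw [Finset.sum_insert ha]
      have haF : a ∈ F := hT (Finset.mem_insert_self a s)
      have hsF : ↑s ⊆ F := fun x hx => hT (Finset.mem_insert_of_mem hx)
      have h1 : g a • a ∈ F := hcone a haF (g a) (hg a (Finset.mem_insert_self a s))
      have h2 : ∑ i ∈ s, g i • i ∈ F :=
        ih hsF fun i hi => hg i (Finset.mem_insert_of_mem hi)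
      exact hadd _ h1 _ h2

/-- A face spanning the same subspace as `K` is all of `K`. -/
lemma face_span_eq {K F : Set E} (hcone : ∀ x ∈ K, ∀ c : ℝ, 0 ≤ c → c • x ∈ K)
    (hF : IsFace K F) (hspan : span ℝ F = span ℝ K) : F = K := by
  obtain ⟨hFne, hFcv, hFcone, hFK, hFface⟩ := hF
  have h0F : (0:E) ∈ F := cone_zero_mem hFne hFcone
  have haddF : ∀ a ∈ F, ∀ b ∈ F, a + b ∈ F := fun a ha b hb => cone_add_mem hFcv hFcone ha hb
  refine Set.Subset.antisymm hFK ?_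
  intro z hz
  have hzspan : z ∈ span ℝ F := by rw [hspan]; exact subset_span hz
  obtain ⟨T, hTF, hzT⟩ := Submodule.mem_span_finite_of_mem_span hzspan
  obtain ⟨c, hc⟩ := mem_span_finset.mp hzT
  set ε : ℝ := (1 + ∑ i ∈ T, |c i|)⁻¹ with hε
  have hsum_nonneg : (0:ℝ) ≤ ∑ i ∈ T, |c i| := Finset.sum_nonneg fun i _ => abs_nonneg _
  have hεpos : 0 < ε := by positivity
  have hεc : ∀ i ∈ T, ε * c i ≤ 1 := by
    intro i hi
    have h1 : c i ≤ ∑ j ∈ T, |c j| :=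
      (le_abs_self _).trans (Finset.single_le_sum (fun j _ => abs_nonneg (c j)) hi)
    have h2 : ε * c i ≤ ε * (1 + ∑ j ∈ T, |c j|) := by
      apply mul_le_mul_of_nonneg_left _ hεpos.le
      linarith
    rw [hε, inv_mul_cancel₀ (by positivity)] at h2
    exact h2
  have hpF : (∑ i ∈ T, i) - ε • z ∈ F := by
    have heq : (∑ i ∈ T, i) - ε • z = ∑ i ∈ T, (1 - ε * c i) • i := by
      rw [← hc.2, Finset.smul_sum]
      rw [← Finset.sum_sub_distrib]
      congr 1
      ext i
      rw [sub_smul, one_smul, smul_smul]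
    rw [heq]
    exact cone_finsum_mem h0F haddF hFcone T hTF _ fun i hi => by linarith [hεc i hi]
  have hεzK : ε • z ∈ K := hcone z hz ε hεpos.le
  have hsumF : ((∑ i ∈ T, i) - ε • z) + ε • z ∈ F := by
    rw [sub_add_cancel]
    have : ∑ i ∈ T, (fun _ => (1:ℝ)) i • i = ∑ i ∈ T, i := by simp
    rw [← this]
    exact cone_finsum_mem h0F haddF hFcone T hTF _ fun i _ => zero_le_one
  have hεzF : ε • z ∈ F :=
    (hFface _ (hFK hpF) _ hεzK hsumF).2
  have := hFcone _ hεzF ε⁻¹ (by positivity)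
  rwa [smul_smul, inv_mul_cancel₀ hεpos.ne', one_smul] at this

/-- `GoodCone` passes to faces. -/
lemma goodCone_face {K F : Set E} (hK : GoodCone K) (hF : IsFace K F) : GoodCone F := by
  obtain ⟨hne, hcl, hcv, hcone, hpt, hope⟩ := hK
  obtain ⟨P, hP2, hPsa, hPimg⟩ := hope F hF
  obtain ⟨hFne, hFcv, hFcone, hFK, hFface⟩ := hF
  refine ⟨hFne, face_closed hcl hFK hP2 hPimg, hFcv, hFcone, ?_, ?_⟩
  · intro x hx
    exact hpt ⟨hFK hx.1, Set.mem_neg.mpr (hFK (Set.mem_neg.mp hx.2))⟩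
  · intro G hG
    have hGK : IsFace K G := isFace_trans ⟨hFne, hFcv, hFcone, hFK, hFface⟩ hG
    obtain ⟨Q, hQ2, hQsa, hQimg⟩ := hope G hGK
    refine ⟨Q, hQ2, hQsa, ?_⟩
    apply Set.Subset.antisymm
    · intro z hz
      obtain ⟨f, hf, rfl⟩ := hz
      rw [← hQimg]
      exact ⟨f, hFK hf, rfl⟩
    · intro g hg
      have hgF : g ∈ F := hG.2.2.2.1 hg
      have : Q g = g := face_fix hQ2 hQimg hg
      exact ⟨g, hgF, this⟩

/-- Every element of the span of a convex cone is a difference of cone elements. -/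
lemma span_diff {K : Set E} (hne : K.Nonempty) (hcv : Convex ℝ K)
    (hcone : ∀ x ∈ K, ∀ c : ℝ, 0 ≤ c → c • x ∈ K)
    {d : E} (hd : d ∈ span ℝ K) : ∃ p ∈ K, ∃ q ∈ K, d = p - q := by
  have h0 : (0:E) ∈ K := cone_zero_mem hne hcone
  induction hd using Submodule.span_induction with
  | mem x hx => exact ⟨x, hx, 0, h0, by simp⟩
  | zero => exact ⟨0, h0, 0, h0, by simp⟩
  | add x y hx hy ihx ihy =>
      obtain ⟨p₁, hp₁, q₁, hq₁, rfl⟩ := ihx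
      obtain ⟨p₂, hp₂, q₂, hq₂, rfl⟩ := ihy
      exact ⟨p₁ + p₂, cone_add_mem hcv hcone hp₁ hp₂, q₁ + q₂,
        cone_add_mem hcv hcone hq₁ hq₂, by abel⟩
  | smul a x hx ihx =>
      obtain ⟨p, hp, q, hq, rfl⟩ := ihx
      rcases le_or_gt 0 a with ha | ha
      · exact ⟨a • p, hcone p hp a ha, a • q, hcone q hq a ha, by rw [smul_sub]⟩
      · refine ⟨(-a) • q, hcone q hq (-a) (by linarith), (-a) • p, hcone p hp (-a) (by linarith), ?_⟩
        rw [smul_sub, neg_smul, neg_smul]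
        abel

/-- If the face generated by `z` is all of `K`, one can move from `z` in any direction of
the span while staying in `K`. -/
lemma wiggle {K : Set E} (hne : K.Nonempty) (hcv : Convex ℝ K)
    (hcone : ∀ x ∈ K, ∀ c : ℝ, 0 ≤ c → c • x ∈ K)
    {z : E} (hz : z ∈ K) (hFz : genFace K z = K)
    {d : E} (hd : d ∈ span ℝ K) : ∃ ε : ℝ, 0 < ε ∧ z + ε • d ∈ K := by
  obtain ⟨p, hp, q, hq, rfl⟩ := span_diff hne hcv hcone hd
  have hqF : q ∈ genFace K z := by rw [hFz]; exact hq
  obtain ⟨-, μ, hμ, hμK⟩ := hqF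
  refine ⟨(μ + 1)⁻¹, by positivity, ?_⟩
  have h1 : (μ + 1)⁻¹ • (μ • z - q) ∈ K := hcone _ hμK _ (by positivity)
  have h2 : (μ + 1)⁻¹ • p ∈ K := hcone p hp _ (by positivity)
  have h3 : (μ + 1)⁻¹ • z ∈ K := hcone z hz _ (by positivity)
  have h4 := cone_add_mem hcv hcone (cone_add_mem hcv hcone h1 h2) h3
  have hμ1 : (μ + 1) ≠ 0 := by positivity
  have heq : (μ + 1)⁻¹ • (μ • z - q) + (μ + 1)⁻¹ • p + (μ + 1)⁻¹ • z
      = z + (μ + 1)⁻¹ • (p - q) := by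
    have h5 : (μ + 1)⁻¹ * μ + (μ + 1)⁻¹ = 1 := by field_simp
    match_scalars
    · linarith
    · ring
    · ring
  rwa [heq] at h4

lemma lim_mem {K : Set E} (hcl : IsClosed K) (u x : E)
    (h : ∀ n : ℕ, ((n : ℝ) + 1)⁻¹ • u + x ∈ K) : x ∈ K := by
  have h1 : Tendsto (fun n : ℕ => ((n : ℝ) + 1)⁻¹) atTop (nhds 0) := by
    simpa [one_div] using tendsto_one_div_add_atTop_nhds_zero_nat (𝕜 := ℝ)
  have h2 : Tendsto (fun n : ℕ => ((n : ℝ) + 1)⁻¹ • u + x) atTop (nhds ((0:ℝ) • u + x)) :=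
    (h1.smul_const u).add tendsto_const_nhds
  rw [zero_smul, zero_add] at h2
  exact hcl.mem_of_tendsto h2 (Eventually.of_forall h)

/-- If the span of a pointed closed cone has dimension at least 2, there is a direction in the
span such that neither it nor its negative lies in `K`. -/
lemma exists_dir {K : Set E} (hcl : IsClosed K)
    (hcone : ∀ x ∈ K, ∀ c : ℝ, 0 ≤ c → c • x ∈ K)
    (hpt : K ∩ (-K) ⊆ {0}) (h2 : 2 ≤ finrank ℝ (span ℝ K)) :
    ∃ d ∈ span ℝ K, d ∉ K ∧ -d ∉ K := by
  classical
  set W : Submodule ℝ E := span ℝ K with hW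
  have : FiniteDimensional ℝ W := inferInstance
  set b := Module.finBasis ℝ W with hb
  have hi0 : (0 : ℕ) < finrank ℝ W := by omega
  have hi1 : (1 : ℕ) < finrank ℝ W := by omega
  set vv : W := b ⟨0, hi0⟩
  set ww : W := b ⟨1, hi1⟩
  set v : E := (vv : E)
  set w : E := (ww : E)
  have hvW : v ∈ W := vv.2
  have hwW : w ∈ W := ww.2
  have hw0 : w ≠ 0 := by
    simpa [w, Submodule.coe_eq_zero] using b.ne_zero ⟨1, hi1⟩
  have hvw : ∀ t : ℝ, v ≠ t • w := by
    intro t ht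
    have hWeq : vv = t • ww := Subtype.coe_injective (by simpa [v, w] using ht)
    have := congrArg (fun z => (b.repr z) ⟨0, hi0⟩) hWeq
    simp only [vv, ww, map_smul, Basis.repr_self, Finsupp.smul_apply] at this
    rw [Finsupp.single_apply, Finsupp.single_apply] at this
    simp [Fin.ext_iff] at this
  by_contra hcon
  push_neg at hcon
  have hcov : ∀ d ∈ W, d ∈ K ∨ -d ∈ K := by
    intro d hd
    by_cases hdK : d ∈ K
    · exact Or.inl hdK
    · exact Or.inr (hcon d hd hdK)
  set A : Set ℝ := {t | v - t • w ∈ K} with hA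
  set B : Set ℝ := {t | t • w - v ∈ K} with hB
  have hAcl : IsClosed A := by
    have : Continuous fun t : ℝ => v - t • w := by continuity
    exact hcl.preimage this
  have hBcl : IsClosed B := by
    have : Continuous fun t : ℝ => t • w - v := by continuity
    exact hcl.preimage this
  have hcover : A ∪ B = Set.univ := by
    ext t
    simp only [Set.mem_union, Set.mem_univ, iff_true, hA, hB, Set.mem_setOf_eq]
    have hdW : v - t • w ∈ W := W.sub_mem hvW (W.smul_mem t hwW)
    rcases hcov _ hdW with h | h
    · exact Or.inl h
    · right; rwa [neg_sub] at h
  have hw_contra : w ∈ K → -w ∈ K → False := by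
    intro h1 h2
    have : w ∈ K ∩ (-K) := ⟨h1, Set.mem_neg.mpr h2⟩
    exact hw0 (hpt this)
  have hAuniv : A ≠ Set.univ := by
    intro hAu
    apply hw_contra
    · -- t = -(n+1) : v + (n+1) w ∈ K, scale
      apply lim_mem hcl v
      intro n
      have ht : (-((n:ℝ)+1)) ∈ A := hAu ▸ Set.mem_univ _
      have := hcone _ ht (((n:ℝ)+1)⁻¹) (by positivity)
      have heq : (((n:ℝ)+1)⁻¹) • (v - (-((n:ℝ)+1)) • w) = ((n:ℝ)+1)⁻¹ • v + w := by
        have hne : ((n:ℝ)+1) ≠ 0 := by positivity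
        rw [smul_sub, neg_smul, smul_neg, smul_smul, inv_mul_cancel₀ hne, one_smul]
        abel
      rwa [heq] at this
    · apply lim_mem hcl v
      intro n
      have ht : (((n:ℝ)+1)) ∈ A := hAu ▸ Set.mem_univ _
      have := hcone _ ht (((n:ℝ)+1)⁻¹) (by positivity)
      have heq : (((n:ℝ)+1)⁻¹) • (v - (((n:ℝ)+1)) • w) = ((n:ℝ)+1)⁻¹ • v + -w := by
        have hne : ((n:ℝ)+1) ≠ 0 := by positivity
        rw [smul_sub, smul_smul, inv_mul_cancel₀ hne, one_smul]
        abel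
      rwa [heq] at this
  have hBuniv : B ≠ Set.univ := by
    intro hBu
    apply hw_contra
    · apply lim_mem hcl (-v)
      intro n
      have ht : (((n:ℝ)+1)) ∈ B := hBu ▸ Set.mem_univ _
      have := hcone _ ht (((n:ℝ)+1)⁻¹) (by positivity)
      have heq : (((n:ℝ)+1)⁻¹) • ((((n:ℝ)+1)) • w - v) = ((n:ℝ)+1)⁻¹ • (-v) + w := by
        have hne : ((n:ℝ)+1) ≠ 0 := by positivity
        rw [smul_sub, smul_smul, inv_mul_cancel₀ hne, one_smul, smul_neg]
        abel
      rwa [heq] at this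
    · apply lim_mem hcl (-v)
      intro n
      have ht : (-((n:ℝ)+1)) ∈ B := hBu ▸ Set.mem_univ _
      have := hcone _ ht (((n:ℝ)+1)⁻¹) (by positivity)
      have heq : (((n:ℝ)+1)⁻¹) • ((-((n:ℝ)+1)) • w - v) = ((n:ℝ)+1)⁻¹ • (-v) + -w := by
        have hne : ((n:ℝ)+1) ≠ 0 := by positivity
        rw [smul_sub, neg_smul, smul_neg, smul_smul, inv_mul_cancel₀ hne, one_smul, smul_neg]
        abel
      rwa [heq] at this
  have hAne : A.Nonempty := by
    rcases Set.eq_empty_or_nonempty A with h | h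
    · exfalso
      apply hBuniv
      rw [← hcover, h, Set.empty_union]
    · exact h
  have hint : (A ∩ B).Nonempty := by
    by_contra hdis
    rw [Set.not_nonempty_iff_eq_empty] at hdis
    have hBcomp : B = Aᶜ := by
      apply Set.Subset.antisymm
      · intro t ht htA
        have hmem : t ∈ A ∩ B := ⟨htA, ht⟩
        rw [hdis] at hmem
        exact hmem
      · intro t ht
        rcases (Set.mem_union t A B).mp (hcover ▸ Set.mem_univ t) with h | h
        · exact absurd h ht
        · exact h
    have hAopen : IsOpen A := by
      rw [← isClosed_compl_iff, ← hBcomp]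
      exact hBcl
    rcases isClopen_iff.mp ⟨hAcl, hAopen⟩ with h | h
    · exact absurd h (Set.nonempty_iff_ne_empty.mp hAne)
    · exact hAuniv h
  obtain ⟨t, htA, htB⟩ := hint
  have h1 : v - t • w ∈ K := htA
  have h2 : -(v - t • w) ∈ K := by rw [neg_sub]; exact htB
  have : v - t • w = 0 := hpt ⟨h1, Set.mem_neg.mpr h2⟩
  exact hvw t (by rwa [sub_eq_zero] at this)

lemma self_mem_genFace {K : Set E} (hne : K.Nonempty)
    (hcone : ∀ x ∈ K, ∀ c : ℝ, 0 ≤ c → c • x ∈ K) {z : E} (hz : z ∈ K) :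
    z ∈ genFace K z :=
  ⟨hz, 1, zero_le_one, by simpa using cone_zero_mem hne hcone⟩

lemma main_aux : ∀ n : ℕ, ∀ K : Set E, GoodCone K → finrank ℝ (span ℝ K) ≤ n →
    K ⊆ dualCone K := by
  intro n
  induction n with
  | zero =>
      intro K hK hrank x hx z hz
      have hspan : span ℝ K = ⊥ := Submodule.finrank_eq_zero.mp (Nat.le_zero.mp hrank)
      have : z ∈ (⊥ : Submodule ℝ E) := hspan ▸ subset_span hz
      rw [Submodule.mem_bot] at this
      simp [this]
  | succ n ih =>
      intro K hK hrank
      obtain ⟨hne, hcl, hcv, hcone, hpt, hope⟩ := hK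
      -- key step: an element of a proper face pairs nonnegatively with everything in `K`
      have good : ∀ z ∈ K, ∀ F, IsFace K F → z ∈ F → F ≠ K → ∀ w ∈ K, 0 ≤ ⟪z, w⟫ := by
        intro z hz F hF hzF hFK w hw
        obtain ⟨P, hP2, hPsa, hPimg⟩ := hope F hF
        have hspanlt : span ℝ F < span ℝ K := by
          have hle : span ℝ F ≤ span ℝ K := span_mono hF.2.2.2.1
          refine lt_of_le_of_ne hle fun heq => hFK (face_span_eq hcone hF heq)
        have hrankF : finrank ℝ (span ℝ F) ≤ n := by
          have := Submodule.finrank_lt_finrank_of_lt hspanlt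
          omega
        have hIH := ih F (goodCone_face ⟨hne, hcl, hcv, hcone, hpt, hope⟩ hF) hrankF
        have hPz : P z = z := face_fix hP2 hPimg hzF
        have hPw : P w ∈ F := hPimg ▸ ⟨w, hw, rfl⟩
        have hinner : ⟪z, w⟫ = ⟪z, P w⟫ := by
          conv_lhs => rw [← hPz]
          rw [hPsa]
        rw [hinner]
        exact hIH hPw z hzF
      intro x hx z hz
      -- goal : 0 ≤ ⟪z, x⟫
      by_cases hFz : genFace K z = K
      swap
      · exact good z hz _ (isFace_genFace hne hcv hcone hz)
          (self_mem_genFace hne hcone hz) hFz x hx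
      by_cases hFx : genFace K x = K
      swap
      · rw [real_inner_comm]
        exact good x hx _ (isFace_genFace hne hcv hcone hx)
          (self_mem_genFace hne hcone hx) hFx z hz
      rcases le_or_gt (finrank ℝ (span ℝ K)) 1 with hdim | hdim
      · -- low-dimensional case : `z` and `x` are parallel
        by_cases hz0 : z = 0
        · simp [hz0]
        · have hzW : z ∈ span ℝ K := subset_span hz
          have hxW : x ∈ span ℝ K := subset_span hx
          have hone : finrank ℝ (span ℝ ({z} : Set E)) = 1 := finrank_span_singleton hz0
          have hle : span ℝ ({z} : Set E) ≤ span ℝ K :=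
            span_le.mpr (by simpa using hzW)
          have hspan : span ℝ ({z} : Set E) = span ℝ K :=
            Submodule.eq_of_le_of_finrank_le hle (by omega)
          have hxz : x ∈ span ℝ ({z} : Set E) := hspan ▸ hxW
          obtain ⟨c, rfl⟩ := Submodule.mem_span_singleton.mp hxz
          rcases le_or_gt 0 c with hc | hc
          · rw [real_inner_smul_right]
            exact mul_nonneg hc real_inner_self_nonneg
          · exfalso
            have := hcone _ hx (-c⁻¹) (neg_pos.mpr (inv_lt_zero.mpr hc)).le
            rw [smul_smul] at this
            have hcc : -c⁻¹ * c = -1 := by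
              rw [neg_mul, inv_mul_cancel₀ hc.ne]
            rw [hcc, neg_one_smul] at this
            exact hz0 (hpt ⟨hz, Set.mem_neg.mpr this⟩)
      · -- dimension ≥ 2 : pick a direction outside `K ∪ -K`
        obtain ⟨d, hdW, hdK, hdnK⟩ := exists_dir hcl hcone hpt (by omega)
        have side : ∀ e : E, e ∈ span ℝ K → e ∉ K →
            ∃ τ : ℝ, 0 < τ ∧ z + τ • e ∈ K ∧ (∀ w ∈ K, 0 ≤ ⟪z + τ • e, w⟫) := by
          intro e heW heK
          set S : Set ℝ := {t | 0 ≤ t ∧ z + t • e ∈ K} with hS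
          have h0S : (0:ℝ) ∈ S := ⟨le_rfl, by simpa using hz⟩
          have hScvx : ∀ t1 ∈ S, ∀ t2 ∈ S, ∀ a b : ℝ, 0 ≤ a → 0 ≤ b → a + b = 1 →
              a * t1 + b * t2 ∈ S := by
            rintro t1 ⟨ht1, ht1K⟩ t2 ⟨ht2, ht2K⟩ a b ha hb hab
            refine ⟨by positivity, ?_⟩
            have hmix := hcv ht1K ht2K ha hb hab
            have heq : a • (z + t1 • e) + b • (z + t2 • e) = z + (a * t1 + b * t2) • e := by
              match_scalars <;> linarith
            rwa [heq] at hmix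
          have hSbdd : BddAbove S := by
            by_contra hbd
            apply heK
            apply lim_mem hcl z
            intro n
            obtain ⟨t, htS, htgt⟩ := not_bddAbove_iff.mp hbd ((n:ℝ)+1)
            have ht0 : 0 < t := lt_of_le_of_lt (by positivity) htgt
            have hmem : ((n:ℝ)+1) ∈ S := by
              have := hScvx t htS 0 h0S (((n:ℝ)+1)/t) (1 - ((n:ℝ)+1)/t)
                (by positivity) (by
                  have : ((n:ℝ)+1)/t ≤ 1 := (div_le_one ht0).mpr htgt.le
                  linarith) (by ring)
              have harith : ((n:ℝ)+1)/t * t + (1 - ((n:ℝ)+1)/t) * 0 = (n:ℝ)+1 := by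
                field_simp; ring
              rwa [harith] at this
            have := hcone _ hmem.2 (((n:ℝ)+1)⁻¹) (by positivity)
            have heq : (((n:ℝ)+1)⁻¹) • (z + (((n:ℝ)+1)) • e) = ((n:ℝ)+1)⁻¹ • z + e := by
              have hne' : ((n:ℝ)+1) ≠ 0 := by positivity
              rw [smul_add, smul_smul, inv_mul_cancel₀ hne', one_smul]
            rwa [heq] at this
          have hScl : IsClosed S := by
            have h1 : IsClosed {t : ℝ | z + t • e ∈ K} := by
              apply hcl.preimage
              continuity
            have : S = Set.Ici (0:ℝ) ∩ {t : ℝ | z + t • e ∈ K} := by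
              ext t; simp [hS, Set.mem_Ici, and_comm]
            rw [this]
            exact isClosed_Ici.inter h1
          have hSne : S.Nonempty := ⟨0, h0S⟩
          set τ := sSup S with hτ
          have hτS : τ ∈ S := hScl.csSup_mem hSne hSbdd
          have hτpos : 0 < τ := by
            obtain ⟨ε, hε, hεK⟩ := wiggle hne hcv hcone hz hFz heW
            have hεS : ε ∈ S := ⟨hε.le, hεK⟩
            exact lt_of_lt_of_le hε (le_csSup hSbdd hεS)
          have haK : z + τ • e ∈ K := hτS.2
          have hFa : genFace K (z + τ • e) ≠ K := by
            intro heq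
            obtain ⟨ε, hε, hεK⟩ := wiggle hne hcv hcone haK heq heW
            have hτε : τ + ε ∈ S := by
              refine ⟨by positivity, ?_⟩
              have : z + (τ + ε) • e = z + τ • e + ε • e := by
                rw [add_smul]; abel
              rwa [this]
            have := le_csSup hSbdd hτε
            linarith
          exact ⟨τ, hτpos, haK, fun w hw => good _ haK _
            (isFace_genFace hne hcv hcone haK) (self_mem_genFace hne hcone haK) hFa w hw⟩
        obtain ⟨τ, hτ, haK, hay⟩ := side d hdW hdK
        obtain ⟨σ, hσ, hbK, hby⟩ := side (-d) (Submodule.neg_mem _ hdW) hdnK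
        have hcomb : (τ + σ) • z = σ • (z + τ • d) + τ • (z + σ • (-d)) := by
          match_scalars <;> ring
        have hinner : (τ + σ) * ⟪z, x⟫ = σ * ⟪z + τ • d, x⟫ + τ * ⟪z + σ • (-d), x⟫ := by
          rw [← real_inner_smul_left, ← real_inner_smul_left, ← real_inner_smul_left,
            hcomb, inner_add_left]
        have h1 : 0 ≤ σ * ⟪z + τ • d, x⟫ := mul_nonneg hσ.le (hay x hx)
        have h2 : 0 ≤ τ * ⟪z + σ • (-d), x⟫ := mul_nonneg hτ.le (hby x hx)
        nlinarith [hinner, h1, h2]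

/-- Let `K` be a pointed closed convex cone in a finite-dimensional Euclidean space.  If
every face of `K` is orthogonally projectionally exposed (i.e., for every face `F` there
is a self-adjoint idempotent linear map `P` with `P(K) = F`), then `K ⊆ K*`. -/
theorem stmt3 (K : Set E) (hKne : K.Nonempty) (hKcl : IsClosed K) (hKcv : Convex ℝ K)
    (hKcone : ∀ x ∈ K, ∀ c : ℝ, 0 ≤ c → c • x ∈ K)
    (hpointed : K ∩ (-K) ⊆ {0})
    (hope : ∀ F : Set E, IsFace K F → ∃ P : E →ₗ[ℝ] E,
      P ∘ₗ P = P ∧ (∀ x y : E, ⟪P x, y⟫ = ⟪x, P y⟫) ∧ P '' K = F) :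
    K ⊆ dualCone K :=
  main_aux (finrank ℝ (span ℝ K)) K ⟨hKne, hKcl, hKcv, hKcone, hpointed, hope⟩ le_rfl
end

section
/- Let G be a graph on vertices {1,…,n} whose ordering is a perfect elimination ordering (if {i,j},{i,k} ∈ E with i < j < k then {j,k} ∈ E). Then for any lower triangular matrix l whose sparsity follows G (l_{ij} ≠ 0 with i>j implies {i,j} ∈ E), the product l·lᵀ also follows the sparsity pattern of G: for i ≠ j with {i,j} ∉ E, (l·lᵀ)_{ij} = 0. -/
open Matrix

/-- Let `G` be a graph on vertices `{1,…,n}` whose ordering is a perfect elimination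
ordering.  Then for any lower triangular matrix `l` whose sparsity follows `G`, the
product `l·lᵀ` also follows the sparsity pattern of `G`. -/
theorem stmt7 {n : ℕ} (G : SimpleGraph (Fin n))
    (hpeo : ∀ i j k : Fin n, i < j → j < k → G.Adj i j → G.Adj i k → G.Adj j k)
    (l : Matrix (Fin n) (Fin n) ℝ)
    (hlt : ∀ i j : Fin n, i < j → l i j = 0)
    (hsp : ∀ i j : Fin n, i ≠ j → ¬ G.Adj i j → l i j = 0)
    (i j : Fin n) (hij : i ≠ j) (hadj : ¬ G.Adj i j) :
    (l * lᵀ) i j = 0 := by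
  rw [Matrix.mul_apply]
  apply Finset.sum_eq_zero
  intro k _
  rw [Matrix.transpose_apply]
  by_cases h1 : l i k = 0
  · simp [h1]
  by_cases h2 : l j k = 0
  · simp [h2]
  exfalso
  -- k ≤ i and k ≤ j
  have hki : k ≤ i := le_of_not_gt fun h => h1 (hlt i k h)
  have hkj : k ≤ j := le_of_not_gt fun h => h2 (hlt j k h)
  rcases eq_or_lt_of_le hki with rfl | hki
  · exact hadj (G.adj_symm (by_contra fun h => h2 (hsp j k (Ne.symm hij) h)))
  rcases eq_or_lt_of_le hkj with rfl | hkj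
  · exact hadj (by_contra fun h => h1 (hsp i k hij h))
  · have a1 : G.Adj k i := G.adj_symm (by_contra fun h => h1 (hsp i k (ne_of_gt hki) h))
    have a2 : G.Adj k j := G.adj_symm (by_contra fun h => h2 (hsp j k (ne_of_gt hkj) h))
    rcases lt_or_gt_of_ne hij with h | h
    · exact hadj (hpeo k i j hki h a1 a2)
    · exact hadj (G.adj_symm (hpeo k j i hkj h a2 a1))
end

section
/- Let G be a graph on vertices {1,…,n} in a trivially perfect elimination ordering. Then for any two upper triangular matrices u, t following the sparsity pattern of G, the product u·t also follows the sparsity pattern of G. -/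
open Matrix

/-- Let `G` be a graph on vertices `{1,…,n}` in a trivially perfect elimination ordering.
Then for any two upper triangular matrices `u, t` following the sparsity pattern of `G`,
the product `u·t` also follows the sparsity pattern of `G`. -/
theorem stmt8 {n : ℕ} (G : SimpleGraph (Fin n))
    (ho1 : ∀ i j k : Fin n, i < j → j < k → G.Adj i j → G.Adj i k → G.Adj j k)
    (ho2 : ∀ i j k : Fin n, i < j → j < k → G.Adj i j → G.Adj j k → G.Adj i k)
    (u t : Matrix (Fin n) (Fin n) ℝ)
    (hu_ut : ∀ i j : Fin n, j < i → u i j = 0)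
    (ht_ut : ∀ i j : Fin n, j < i → t i j = 0)
    (hu_sp : ∀ i j : Fin n, i ≠ j → ¬ G.Adj i j → u i j = 0)
    (ht_sp : ∀ i j : Fin n, i ≠ j → ¬ G.Adj i j → t i j = 0) :
    ∀ i j : Fin n, i ≠ j → ¬ G.Adj i j → (u * t) i j = 0 := by
  intro i j hij hadj
  rw [Matrix.mul_apply]
  apply Finset.sum_eq_zero
  intro k _
  rcases lt_trichotomy k i with hki | hki | hki
  · rw [hu_ut i k hki, zero_mul]
  · subst hki
    rw [ht_sp k j hij hadj, mul_zero]
  · rcases lt_trichotomy j k with hjk | hjk | hjk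
    · rw [ht_ut k j hjk, mul_zero]
    · subst hjk
      rw [hu_sp i j hij hadj, zero_mul]
    · -- i < k < j
      by_cases h1 : G.Adj i k
      · by_cases h2 : G.Adj k j
        · exact absurd (ho2 i k j hki hjk h1 h2) hadj
        · rw [ht_sp k j (ne_of_lt hjk) h2, mul_zero]
      · rw [hu_sp i k (ne_of_lt hki) h1, zero_mul]
end

section
/- Each diagonal idempotent e_i of a T-algebra A of rank r generates an extreme ray of the closed homogeneous cone cl C(A) = {tt* : t ∈ T₊}: if x + y = e_i with x, y ∈ cl C(A), then x and y are nonnegative multiples of e_i. -/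
/-- A T-algebra of rank `r` in the sense of Vinberg: a bigraded algebra
`A = ⊕_{i,j} A_{ij}` with involution `conj`, satisfying axioms (a1)–(a7).
`c a i j` denotes the `(i,j)` component of `a`, `e i` the unit of `A_{ii} ≅ ℝ`, and
`ρ i a` the real coordinate of the `(i,i)` component of `a`; the trace is
`tr a = ∑ i, ρ i a` and the inner product is `⟨a,b⟩ = tr (a b*)`. -/
structure TAlgebra (A : Type*) [AddCommGroup A] [Module ℝ A] (r : ℕ) where
  mul : A →ₗ[ℝ] A →ₗ[ℝ] A
  conj : A →ₗ[ℝ] A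
  S : Fin r → Fin r → Submodule ℝ A
  c : A → Fin r → Fin r → A
  e : Fin r → A
  ρ : Fin r → A → ℝ
  -- the bigradation
  c_mem : ∀ a i j, c a i j ∈ S i j
  c_sum : ∀ a, (∑ i, ∑ j, c a i j) = a
  c_unique : ∀ (a : A) (f : Fin r → Fin r → A), (∀ i j, f i j ∈ S i j) →
    (∑ i, ∑ j, f i j) = a → ∀ i j, c a i j = f i j
  grade_mul : ∀ i j k : Fin r, ∀ x ∈ S i j, ∀ y ∈ S j k, mul x y ∈ S i k
  grade_mul_zero : ∀ i j k l : Fin r, j ≠ k → ∀ x ∈ S i j, ∀ y ∈ S k l, mul x y = 0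
  -- the involution
  conj_conj : ∀ a, conj (conj a) = a
  conj_mul : ∀ a b, conj (mul a b) = mul (conj b) (conj a)
  conj_grade : ∀ i j : Fin r, ∀ x ∈ S i j, conj x ∈ S j i
  -- (a1): each `A_{ii}` is a subalgebra isomorphic to `ℝ`, with unit `e i`
  e_mem : ∀ i, e i ∈ S i i
  conj_e : ∀ i, conj (e i) = e i
  e_ne : ∀ i, e i ≠ 0
  diag_coord : ∀ a i, c a i i = ρ i a • e i
  ρ_e : ∀ i, ρ i (e i) = 1
  e_idem : ∀ i, mul (e i) (e i) = e i
  -- (a2)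
  e_mul : ∀ a (i j : Fin r), mul (e i) (c a i j) = c a i j
  mul_e : ∀ a (i j : Fin r), mul (c a j i) (e i) = c a j i
  -- (a3)
  tr_comm : ∀ a b, (∑ i, ρ i (mul a b)) = ∑ i, ρ i (mul b a)
  -- (a4)
  tr_assoc : ∀ a b d, (∑ i, ρ i (mul (mul a b) d)) = ∑ i, ρ i (mul a (mul b d))
  -- (a5)
  tr_nonneg : ∀ a, 0 ≤ ∑ i, ρ i (mul a (conj a))
  tr_pos : ∀ a, (∑ i, ρ i (mul a (conj a))) = 0 → a = 0
  -- (a6)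
  assoc6 : ∀ i j k l : Fin r, i ≤ j → j ≤ k → k ≤ l →
    ∀ x ∈ S i j, ∀ y ∈ S j k, ∀ z ∈ S k l, mul x (mul y z) = mul (mul x y) z
  -- (a7)
  assoc7 : ∀ i j k l : Fin r, i ≤ j → j ≤ k → l ≤ k →
    ∀ x ∈ S i j, ∀ y ∈ S j k, ∀ z ∈ S l k,
      mul x (mul y (conj z)) = mul (mul x y) (conj z)

namespace TAlgebra

variable {A : Type*} [AddCommGroup A] [Module ℝ A] {r : ℕ} (T : TAlgebra A r)

/-- `t` is upper triangular: all components `t_{ij}` with `j < i` vanish. -/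
def UpperTriangular (t : A) : Prop := ∀ i j : Fin r, j < i → T.c t i j = 0

/-- The set `T₊` of upper triangular elements with nonnegative diagonal. -/
def Tplus : Set A := {t | T.UpperTriangular t ∧ ∀ i, 0 ≤ T.ρ i t}

/-- The closed homogeneous cone `cl C(A) = {tt* : t ∈ T₊}`. -/
def clCone : Set A := {x | ∃ t ∈ T.Tplus, x = T.mul t (T.conj t)}

/-- `t ∈ T₊` is proper if `ρ_i(t_{ii}) = 0` implies that the `i`-th column of `t`
vanishes. -/
def Proper (t : A) : Prop :=
  t ∈ T.Tplus ∧ ∀ i : Fin r, T.ρ i t = 0 → ∀ k : Fin r, T.c t k i = 0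

/-- The trace of the T-algebra. -/
def tr (a : A) : ℝ := ∑ i, T.ρ i a

/-- The inner product `⟨a,b⟩ = tr (a b*)` of the T-algebra. -/
def inner' (a b : A) : ℝ := T.tr (T.mul a (T.conj b))

end TAlgebra

namespace TAlgebra

variable {A : Type*} [AddCommGroup A] [Module ℝ A] {r : ℕ} (T : TAlgebra A r)

lemma c_zero' (i j : Fin r) : T.c 0 i j = 0 :=
  T.c_unique 0 (fun _ _ => 0) (fun _ _ => Submodule.zero_mem _) (by simp) i j

lemma c_add' (a b : A) (i j : Fin r) : T.c (a + b) i j = T.c a i j + T.c b i j :=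
  T.c_unique (a + b) (fun p q => T.c a p q + T.c b p q)
    (fun p q => Submodule.add_mem _ (T.c_mem a p q) (T.c_mem b p q))
    (by simp only [Finset.sum_add_distrib, T.c_sum]) i j

lemma c_single {a : A} {k l : Fin r} (ha : a ∈ T.S k l) (i j : Fin r) :
    T.c a i j = if i = k ∧ j = l then a else 0 := by
  refine T.c_unique a (fun p q => if p = k ∧ q = l then a else 0) ?_ ?_ i j
  · intro p q
    show (if p = k ∧ q = l then a else 0) ∈ T.S p q
    split_ifs with h
    · obtain ⟨rfl, rfl⟩ := h; exact ha
    · exact Submodule.zero_mem _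
  · simp [ite_and, Finset.sum_ite_eq, Finset.sum_ite_eq']

lemma c_conj (a : A) (i j : Fin r) : T.c (T.conj a) i j = T.conj (T.c a j i) := by
  refine T.c_unique (T.conj a) (fun p q => T.conj (T.c a q p))
    (fun p q => T.conj_grade q p _ (T.c_mem a q p)) ?_ i j
  rw [Finset.sum_comm]
  simp only [← map_sum]
  rw [T.c_sum]

lemma smul_e_cancel {s t : ℝ} {k : Fin r} (h : s • T.e k = t • T.e k) : s = t := by
  have h2 : (s - t) • T.e k = 0 := by rw [sub_smul, h, sub_self]
  rcases smul_eq_zero.mp h2 with h3 | h3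
  · exact sub_eq_zero.mp h3
  · exact absurd h3 (T.e_ne k)

lemma rho_add (a b : A) (k : Fin r) : T.ρ k (a + b) = T.ρ k a + T.ρ k b := by
  apply T.smul_e_cancel (k := k)
  rw [add_smul]
  simp only [← T.diag_coord]
  exact T.c_add' a b k k

lemma rho_of_mem {a : A} {k l : Fin r} (ha : a ∈ T.S k l) {i : Fin r}
    (h : ¬(i = k ∧ i = l)) : T.ρ i a = 0 := by
  have h1 : T.c a i i = 0 := by rw [T.c_single ha, if_neg h]
  have h2 := T.diag_coord a i
  rw [h1] at h2
  rcases smul_eq_zero.mp h2.symm with h3 | h3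
  · exact h3
  · exact absurd h3 (T.e_ne i)

lemma mul_expand (u v : A) :
    T.mul u v = ∑ p, ∑ q, ∑ p', ∑ q', T.mul (T.c u p q) (T.c v p' q') := by
  have h1 : T.mul u = ∑ p, ∑ q, T.mul (T.c u p q) := by
    conv_lhs => rw [← T.c_sum u]
    rw [map_sum]
    exact Finset.sum_congr rfl fun p _ => map_sum _ _ _
  rw [h1]
  simp only [LinearMap.sum_apply]
  refine Finset.sum_congr rfl fun p _ => Finset.sum_congr rfl fun q _ => ?_
  conv_lhs => rw [← T.c_sum v]
  rw [map_sum (T.mul (T.c u p q))]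
  exact Finset.sum_congr rfl fun p' _ => map_sum _ _ _

/-- Key lemma: the `(p,p')` component of `t t*`. -/
lemma c_mul_conj (t : A) (p p' : Fin r) :
    T.c (T.mul t (T.conj t)) p p' = ∑ q, T.mul (T.c t p q) (T.conj (T.c t p' q)) := by
  refine T.c_unique _ (fun p p' => ∑ q, T.mul (T.c t p q) (T.conj (T.c t p' q))) ?_ ?_ p p'
  · intro p p'
    exact Submodule.sum_mem _ fun q _ =>
      T.grade_mul p q p' _ (T.c_mem t p q) _ (T.conj_grade p' q _ (T.c_mem t p' q))
  · rw [T.mul_expand]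
    refine Finset.sum_congr rfl fun p _ => ?_
    rw [Finset.sum_comm]
    refine Finset.sum_congr rfl fun q _ => ?_
    refine Eq.trans ?_ (Finset.sum_eq_single q (fun p' _ hne => Finset.sum_eq_zero fun q' _ =>
      T.grade_mul_zero p q p' q' hne.symm _ (T.c_mem t p q) _ (T.c_mem (T.conj t) p' q'))
      (fun h => absurd (Finset.mem_univ _) h)).symm
    simp only [T.c_conj]

lemma cone_component {x : A} (hx : x ∈ T.clCone) (k : Fin r) :
    0 ≤ T.ρ k x ∧ (T.ρ k x = 0 → ∀ l, T.c x k l = 0 ∧ T.c x l k = 0) := by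
  obtain ⟨t, -, rfl⟩ := hx
  have hFmem : ∀ p p', (∑ q, T.mul (T.c t p q) (T.conj (T.c t p' q))) ∈ T.S p p' :=
    fun p p' => Submodule.sum_mem _ fun q _ =>
      T.grade_mul p q p' _ (T.c_mem t p q) _ (T.conj_grade p' q _ (T.c_mem t p' q))
  -- the k-th row of t
  set a : A := ∑ q, T.c t k q with ha
  have hconj : T.conj a = ∑ q, T.conj (T.c t k q) := by rw [ha, map_sum]
  have hmul_a : T.mul a = ∑ q, T.mul (T.c t k q) := by rw [ha]; exact map_sum _ _ _
  have haa : T.mul a (T.conj a) = ∑ q, T.mul (T.c t k q) (T.conj (T.c t k q)) := by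
    rw [hmul_a]
    simp only [LinearMap.sum_apply]
    refine Finset.sum_congr rfl fun q _ => ?_
    rw [hconj, map_sum (T.mul (T.c t k q))]
    exact Finset.sum_eq_single q (fun q' _ hne =>
      T.grade_mul_zero k q q' k hne.symm _ (T.c_mem t k q) _
        (T.conj_grade k q' _ (T.c_mem t k q')))
      (fun h => absurd (Finset.mem_univ _) h)
  -- ρ k of the diagonal component equals ρ k of x
  have hrk : T.ρ k (∑ q, T.mul (T.c t k q) (T.conj (T.c t k q)))
      = T.ρ k (T.mul t (T.conj t)) := by
    apply T.smul_e_cancel (k := k)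
    simp only [← T.diag_coord]
    rw [T.c_mul_conj, T.c_single (hFmem k k), if_pos ⟨rfl, rfl⟩]
  have htr : (∑ j, T.ρ j (T.mul a (T.conj a))) = T.ρ k (T.mul t (T.conj t)) := by
    rw [haa, ← hrk]
    refine Finset.sum_eq_single k (fun j _ hne => ?_) (fun h => absurd (Finset.mem_univ _) h)
    exact T.rho_of_mem (hFmem k k) (by tauto)
  constructor
  · rw [← htr]; exact T.tr_nonneg a
  · intro h0 l
    have ha0 : a = 0 := T.tr_pos a (by rw [htr, h0])
    have hcol : ∀ q, T.c t k q = 0 := by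
      intro q
      have h5 := T.c_unique a (fun p q => if p = k then T.c t k q else 0)
        (fun p q => by
          show (if p = k then T.c t k q else 0) ∈ T.S p q
          split_ifs with h
          · rw [h]; exact T.c_mem t k q
          · exact Submodule.zero_mem _)
        (by
          rw [Finset.sum_eq_single k (fun p _ hp => Finset.sum_eq_zero fun q _ => if_neg hp)
            (fun h => absurd (Finset.mem_univ _) h)]
          simp; exact ha.symm) k q
      rw [ha0, T.c_zero'] at h5
      simpa using h5.symm
    constructor
    · rw [T.c_mul_conj]
      exact Finset.sum_eq_zero fun q _ => by rw [hcol q]; simp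
    · rw [T.c_mul_conj]
      exact Finset.sum_eq_zero fun q _ => by rw [hcol q]; simp

end TAlgebra

/-- Each diagonal idempotent `e i` of a T-algebra `A` of rank `r` generates an extreme ray
of the closed homogeneous cone `cl C(A)`: if `x + y = e i` with `x, y ∈ cl C(A)`, then `x`
and `y` are nonnegative multiples of `e i`. -/
theorem stmt12 {A : Type*} [AddCommGroup A] [Module ℝ A] {r : ℕ} (T : TAlgebra A r)
    (i : Fin r) (x y : A) (hx : x ∈ T.clCone) (hy : y ∈ T.clCone)
    (hxy : x + y = T.e i) :
    ∃ α β : ℝ, 0 ≤ α ∧ 0 ≤ β ∧ x = α • T.e i ∧ y = β • T.e i := by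
  have hrho : ∀ k : Fin r, k ≠ i → T.ρ k x = 0 ∧ T.ρ k y = 0 := by
    intro k hk
    have h1 : T.ρ k (x + y) = 0 := by
      rw [hxy]
      exact T.rho_of_mem (T.e_mem i) (by tauto)
    rw [T.rho_add] at h1
    have h2 := (T.cone_component hx k).1
    have h3 := (T.cone_component hy k).1
    constructor <;> linarith
  have hzero : ∀ z : A, z ∈ T.clCone → (∀ k : Fin r, k ≠ i → T.ρ k z = 0) →
      z = T.ρ i z • T.e i := by
    intro z hz hzr
    have hcz : ∀ p q : Fin r, ¬(p = i ∧ q = i) → T.c z p q = 0 := by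
      intro p q hpq
      by_cases hp : p = i
      · have hq : q ≠ i := fun h => hpq ⟨hp, h⟩
        exact (((T.cone_component hz q).2 (hzr q hq)) p).2
      · exact (((T.cone_component hz p).2 (hzr p hp)) q).1
    have e1 : (∑ p, ∑ q, T.c z p q) = ∑ q, T.c z i q :=
      Finset.sum_eq_single i
        (fun p _ hp => Finset.sum_eq_zero fun q _ => hcz p q (by tauto))
        (fun h => absurd (Finset.mem_univ _) h)
    have e2 : (∑ q, T.c z i q) = T.c z i i :=
      Finset.sum_eq_single i (fun q _ hq => hcz i q (by tauto))
        (fun h => absurd (Finset.mem_univ _) h)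
    conv_lhs => rw [← T.c_sum z]
    rw [e1, e2, T.diag_coord]
  exact ⟨T.ρ i x, T.ρ i y, (T.cone_component hx i).1, (T.cone_component hy i).1,
    hzero x hx fun k hk => (hrho k hk).1, hzero y hy fun k hk => (hrho k hk).2⟩
end

section
/- Let G be a homogeneous chordal graph on {1,…,n} in a trivially perfect elimination ordering, let x be a PSD-completable matrix with pattern G, and let x = π_G(t tᵀ) with t upper triangular, pattern following G, nonnegative diagonal, and proper. If t has exactly n strictly positive diagonal entries (full rank case), then w := t tᵀ is the PSD completion of x maximizing the determinant; moreover w⁻¹ has sparsity pattern G. -/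
open Matrix
open scoped Classical

/-- The projection of a matrix onto the sparsity pattern of the graph `G`. -/
noncomputable def piG {n : ℕ} (G : SimpleGraph (Fin n)) (x : Matrix (Fin n) (Fin n) ℝ) :
    Matrix (Fin n) (Fin n) ℝ :=
  Matrix.of fun i j => if i ≠ j ∧ ¬ G.Adj i j then 0 else x i j

/-- A matrix is upper triangular and follows the sparsity pattern of `G`. -/
def FollowsG {n : ℕ} (G : SimpleGraph (Fin n)) (m : Matrix (Fin n) (Fin n) ℝ) : Prop :=
  (∀ i j : Fin n, j < i → m i j = 0) ∧ (∀ i j : Fin n, i ≠ j → ¬ G.Adj i j → m i j = 0)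

lemma followsG_one {n : ℕ} (G : SimpleGraph (Fin n)) : FollowsG G (1 : Matrix (Fin n) (Fin n) ℝ) := by
  constructor
  · intro i j h
    simp [Matrix.one_apply, (ne_of_lt h).symm.symm]
    intro e; exact absurd e.symm (ne_of_lt h)
  · intro i j hij _
    simp [Matrix.one_apply, hij]

lemma followsG_smul {n : ℕ} (G : SimpleGraph (Fin n)) (c : ℝ) {m : Matrix (Fin n) (Fin n) ℝ}
    (hm : FollowsG G m) : FollowsG G (c • m) := by
  constructor
  · intro i j h; simp [hm.1 i j h]
  · intro i j hij hadj; simp [hm.2 i j hij hadj]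

lemma followsG_mul {n : ℕ} {G : SimpleGraph (Fin n)}
    (ho2 : ∀ i j k : Fin n, i < j → j < k → G.Adj i j → G.Adj j k → G.Adj i k)
    {a b : Matrix (Fin n) (Fin n) ℝ} (ha : FollowsG G a) (hb : FollowsG G b) :
    FollowsG G (a * b) := by
  constructor
  · intro i j hji
    rw [Matrix.mul_apply]
    apply Finset.sum_eq_zero
    intro k _
    by_cases h : k < i
    · rw [ha.1 i k h, zero_mul]
    · have : j < k := lt_of_lt_of_le hji (not_lt.mp h)
      rw [hb.1 k j this, mul_zero]
  · intro i j hij hadj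
    rw [Matrix.mul_apply]
    apply Finset.sum_eq_zero
    intro k _
    by_contra hk
    have h1 : a i k ≠ 0 := left_ne_zero_of_mul hk
    have h2 : b k j ≠ 0 := right_ne_zero_of_mul hk
    have hik : ¬ k < i := fun h => h1 (ha.1 i k h)
    have hkj : ¬ j < k := fun h => h2 (hb.1 k j h)
    have e1 : i = k ∨ G.Adj i k := by
      by_contra hc; push_neg at hc; exact h1 (ha.2 i k hc.1 hc.2)
    have e2 : k = j ∨ G.Adj k j := by
      by_contra hc; push_neg at hc; exact h2 (hb.2 k j hc.1 hc.2)
    rcases e1 with rfl | a1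
    · rcases e2 with rfl | a2
      · exact hij rfl
      · exact hadj a2
    · rcases e2 with rfl | a2
      · exact hadj a1
      · have hik' : i < k := lt_of_le_of_ne (not_lt.mp hik) (G.ne_of_adj a1)
        have hkj' : k < j := lt_of_le_of_ne (not_lt.mp hkj) (G.ne_of_adj a2)
        exact hadj (ho2 i k j hik' hkj' a1 a2)

lemma followsG_pow {n : ℕ} {G : SimpleGraph (Fin n)}
    (ho2 : ∀ i j k : Fin n, i < j → j < k → G.Adj i j → G.Adj j k → G.Adj i k)
    {a : Matrix (Fin n) (Fin n) ℝ} (ha : FollowsG G a) (k : ℕ) : FollowsG G (a ^ k) := by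
  induction k with
  | zero => simpa using followsG_one G
  | succ k ih => rw [pow_succ]; exact followsG_mul ho2 ih ha

lemma followsG_sum {n : ℕ} (G : SimpleGraph (Fin n)) {ι : Type*} (s : Finset ι)
    (f : ι → Matrix (Fin n) (Fin n) ℝ) (hf : ∀ i ∈ s, FollowsG G (f i)) :
    FollowsG G (∑ i ∈ s, f i) := by
  constructor
  · intro i j h
    rw [Matrix.sum_apply]
    exact Finset.sum_eq_zero fun k hk => (hf k hk).1 i j h
  · intro i j hij hadj
    rw [Matrix.sum_apply]
    exact Finset.sum_eq_zero fun k hk => (hf k hk).2 i j hij hadj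

lemma followsG_aeval {n : ℕ} {G : SimpleGraph (Fin n)}
    (ho2 : ∀ i j k : Fin n, i < j → j < k → G.Adj i j → G.Adj j k → G.Adj i k)
    {a : Matrix (Fin n) (Fin n) ℝ} (ha : FollowsG G a) (p : Polynomial ℝ) :
    FollowsG G (Polynomial.aeval a p) := by
  rw [Polynomial.aeval_eq_sum_range]
  exact followsG_sum G _ _ fun i _ => followsG_smul G _ (followsG_pow ho2 ha i)

/-- The inverse of an invertible matrix following `G` follows `G`. -/
lemma followsG_inv {n : ℕ} {G : SimpleGraph (Fin n)}
    (ho2 : ∀ i j k : Fin n, i < j → j < k → G.Adj i j → G.Adj j k → G.Adj i k)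
    {t : Matrix (Fin n) (Fin n) ℝ} (ht : FollowsG G t) (hdet : t.det ≠ 0) :
    FollowsG G t⁻¹ := by
  set p := t.charpoly with hp
  have hchar : (Polynomial.aeval t) p = 0 := Matrix.aeval_self_charpoly t
  set c := p.coeff 0 with hc
  have hc0 : c ≠ 0 := by
    intro h
    apply hdet
    rw [Matrix.det_eq_sign_charpoly_coeff, ← hc, h, mul_zero]
  have hsplit : p.divX * Polynomial.X + Polynomial.C c = p := Polynomial.divX_mul_X_add p
  have hmain : (Polynomial.aeval t) p.divX * t + c • (1 : Matrix (Fin n) (Fin n) ℝ) = 0 := by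
    have := hchar
    rw [← hsplit] at this
    simpa [map_add, _root_.map_mul, Polynomial.aeval_X, Polynomial.aeval_C,
      Algebra.algebraMap_eq_smul_one] using this
  set r := (-c)⁻¹ • (Polynomial.aeval t) p.divX with hr
  have hcomm : t * (Polynomial.aeval t) p.divX = (Polynomial.aeval t) p.divX * t := by
    have h1 : (Polynomial.aeval t) (Polynomial.X * p.divX) =
        (Polynomial.aeval t) (p.divX * Polynomial.X) := by rw [mul_comm]
    simpa [_root_.map_mul, Polynomial.aeval_X] using h1
  have hinv : t * r = 1 := by
    rw [hr, Matrix.mul_smul, hcomm]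
    have h2 : (Polynomial.aeval t) p.divX * t = (-c) • (1 : Matrix (Fin n) (Fin n) ℝ) := by
      have := hmain
      rw [add_eq_zero_iff_eq_neg] at this
      rw [this, neg_smul]
    rw [h2, smul_smul, inv_mul_cancel₀ (neg_ne_zero.mpr hc0), one_smul]
  rw [Matrix.inv_eq_right_inv hinv]
  exact followsG_smul G _ (followsG_aeval ho2 ht p.divX)

/-- Trace of a real hermitian matrix is the sum of its eigenvalues. -/
lemma trace_eq_sum_eigenvalues {n : ℕ} {A : Matrix (Fin n) (Fin n) ℝ} (hA : A.IsHermitian) :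
    A.trace = ∑ i, hA.eigenvalues i := by
  simpa using hA.trace_eq_sum_eigenvalues

/-- Let `G` be a homogeneous chordal graph on `{1,…,n}` in a trivially perfect elimination
ordering (conditions (o1) and (o2)), let `x` be a PSD-completable matrix with pattern `G`,
and `x = π_G(t tᵀ)` with `t` upper triangular following `G`, with nonnegative diagonal and
proper.  If all `n` diagonal entries of `t` are strictly positive, then `w := t tᵀ` is the
PSD completion of `x` maximizing the determinant; moreover `w⁻¹` has sparsity pattern `G`. -/
theorem stmt17 {n : ℕ} (G : SimpleGraph (Fin n))
    (ho1 : ∀ i j k : Fin n, i < j → j < k → G.Adj i j → G.Adj i k → G.Adj j k)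
    (ho2 : ∀ i j k : Fin n, i < j → j < k → G.Adj i j → G.Adj j k → G.Adj i k)
    (t : Matrix (Fin n) (Fin n) ℝ)
    (hut : ∀ i j : Fin n, j < i → t i j = 0)
    (hpat : ∀ i j : Fin n, i ≠ j → ¬ G.Adj i j → t i j = 0)
    (hproper : ∀ i : Fin n, t i i = 0 → ∀ k : Fin n, t k i = 0)
    (hdiag : ∀ i : Fin n, 0 < t i i)
    (x : Matrix (Fin n) (Fin n) ℝ) (hx : x = piG G (t * tᵀ)) :
    (t * tᵀ).PosSemidef ∧ piG G (t * tᵀ) = x ∧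
      (∀ w : Matrix (Fin n) (Fin n) ℝ, w.PosSemidef → piG G w = x →
        w.det ≤ (t * tᵀ).det) ∧
      (∀ i j : Fin n, i ≠ j → ¬ G.Adj i j → (t * tᵀ)⁻¹ i j = 0) := by
  have ht : FollowsG G t := ⟨hut, hpat⟩
  have hdet_t : t.det = ∏ i, t i i :=
    Matrix.det_of_upperTriangular (fun i j h => hut i j h)
  have hdt : (0:ℝ) < t.det := by
    rw [hdet_t]; exact Finset.prod_pos fun i _ => hdiag i
  have hdm : (0:ℝ) < (t * tᵀ).det := by
    rw [Matrix.det_mul, Matrix.det_transpose]; positivity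
  have hTt : tᴴ = tᵀ := Matrix.conjTranspose_eq_transpose_of_trivial t
  have hpsd : (t * tᵀ).PosSemidef := by
    rw [← hTt]; exact Matrix.posSemidef_self_mul_conjTranspose t
  have hu : FollowsG G t⁻¹ := followsG_inv ho2 ht (ne_of_gt hdt)
  have hminv : (t * tᵀ)⁻¹ = (t⁻¹)ᵀ * t⁻¹ := by
    rw [Matrix.mul_inv_rev, Matrix.transpose_nonsing_inv]
  -- Part 4: sparsity of the inverse
  have hpart4 : ∀ i j : Fin n, i ≠ j → ¬ G.Adj i j → (t * tᵀ)⁻¹ i j = 0 := by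
    intro i j hij hadj
    rw [hminv, Matrix.mul_apply]
    apply Finset.sum_eq_zero
    intro k _
    rw [Matrix.transpose_apply]
    by_contra hk
    have h1 : t⁻¹ k i ≠ 0 := left_ne_zero_of_mul hk
    have h2 : t⁻¹ k j ≠ 0 := right_ne_zero_of_mul hk
    have hki : ¬ i < k := fun h => h1 (hu.1 k i h)
    have hkj : ¬ j < k := fun h => h2 (hu.1 k j h)
    have e1 : k = i ∨ G.Adj k i := by
      by_contra hc; push_neg at hc; exact h1 (hu.2 k i hc.1 hc.2)
    have e2 : k = j ∨ G.Adj k j := by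
      by_contra hc; push_neg at hc; exact h2 (hu.2 k j hc.1 hc.2)
    rcases e1 with rfl | a1
    · rcases e2 with rfl | a2
      · exact hij rfl
      · exact hadj a2
    · rcases e2 with rfl | a2
      · exact hadj (G.adj_symm a1)
      · have hki' : k < i := lt_of_le_of_ne (not_lt.mp hki) (G.ne_of_adj a1)
        have hkj' : k < j := lt_of_le_of_ne (not_lt.mp hkj) (G.ne_of_adj a2)
        rcases lt_trichotomy i j with h | h | h
        · exact hadj (ho1 k i j hki' h a1 a2)
        · exact hij h
        · exact hadj (G.adj_symm (ho1 k j i hkj' h a2 a1))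
  refine ⟨hpsd, hx.symm, ?_, hpart4⟩
  intro w hw hpi
  rcases Nat.eq_zero_or_pos n with hn | hn
  · subst hn
    rw [Matrix.det_fin_zero, Matrix.det_fin_zero]
  -- agreement on the pattern
  have hagree : ∀ i j : Fin n, (i = j ∨ G.Adj i j) → w i j = (t * tᵀ) i j := by
    intro i j h
    have := congrFun (congrFun (hpi.trans hx) i) j
    rcases h with rfl | h
    · simpa [piG] using this
    · simpa [piG, h] using this
  set m := t * tᵀ with hm
  have hmu : IsUnit m.det := isUnit_iff_ne_zero.mpr (ne_of_gt hdm)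
  -- trace computation
  have htr : (m⁻¹ * w).trace = (n : ℝ) := by
    have h1 : (m⁻¹ * w).trace = (m⁻¹ * m).trace := by
      simp only [Matrix.trace, Matrix.diag, Matrix.mul_apply]
      apply Finset.sum_congr rfl
      intro i _
      apply Finset.sum_congr rfl
      intro j _
      by_cases h : j = i ∨ G.Adj j i
      · rw [hagree j i h]
      · push_neg at h
        rw [hpart4 i j (fun e => h.1 e.symm) (fun a => h.2 (G.adj_symm a)), zero_mul, zero_mul]
    rw [h1, Matrix.nonsing_inv_mul m hmu, Matrix.trace_one]
    simp
  -- the normalized matrix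
  set a := t⁻¹ * w * (t⁻¹)ᵀ with ha
  clear_value a
  have hpsd_a : a.PosSemidef := by
    rw [ha]
    have := hw.mul_mul_conjTranspose_same t⁻¹
    rwa [Matrix.conjTranspose_eq_transpose_of_trivial] at this
  have htr_a : a.trace = (n : ℝ) := by
    rw [ha, Matrix.trace_mul_cycle, ← hminv, htr]
  -- AM–GM on the eigenvalues
  have heig : ∀ i, 0 ≤ hpsd_a.1.eigenvalues i := hpsd_a.eigenvalues_nonneg
  have hsum : ∑ i, hpsd_a.1.eigenvalues i = (n : ℝ) := by
    rw [← trace_eq_sum_eigenvalues hpsd_a.1, htr_a]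
  have hprod : a.det = ∏ i, hpsd_a.1.eigenvalues i := by
    simpa using hpsd_a.1.det_eq_prod_eigenvalues
  have hdeta : a.det ≤ 1 := by
    set lam := hpsd_a.1.eigenvalues with hlam
    have hn' : (n : ℝ) ≠ 0 := Nat.cast_ne_zero.mpr hn.ne'
    have hamgm : ∏ i, lam i ^ ((n : ℝ)⁻¹) ≤ ∑ i, (n : ℝ)⁻¹ * lam i := by
      apply Real.geom_mean_le_arith_mean_weighted
      · intro i _; positivity
      · rw [Finset.sum_const, Finset.card_univ, Fintype.card_fin, nsmul_eq_mul,
          mul_inv_cancel₀ hn']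
      · intro i _; exact heig i
    have hrhs : ∑ i, (n : ℝ)⁻¹ * lam i = 1 := by
      rw [← Finset.mul_sum, hsum, inv_mul_cancel₀ hn']
    have hle1 : ∏ i, lam i ^ ((n : ℝ)⁻¹) ≤ 1 := by rw [← hrhs]; exact hamgm
    have hppos : (0:ℝ) ≤ ∏ i, lam i ^ ((n : ℝ)⁻¹) :=
      Finset.prod_nonneg fun i _ => Real.rpow_nonneg (heig i) _
    have hpow : (∏ i, lam i ^ ((n : ℝ)⁻¹)) ^ n = ∏ i, lam i := by
      rw [← Finset.prod_pow]
      apply Finset.prod_congr rfl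
      intro i _
      rw [← Real.rpow_natCast (lam i ^ ((n : ℝ)⁻¹)) n, ← Real.rpow_mul (heig i),
        inv_mul_cancel₀ hn', Real.rpow_one]
    calc a.det = ∏ i, lam i := hprod
      _ = (∏ i, lam i ^ ((n : ℝ)⁻¹)) ^ n := hpow.symm
      _ ≤ 1 ^ n := pow_le_pow_left₀ hppos hle1 n
      _ = 1 := one_pow n
  -- recover w from a
  have hinv1 : t * t⁻¹ = 1 := Matrix.mul_nonsing_inv t (isUnit_iff_ne_zero.mpr (ne_of_gt hdt))
  have hinv2 : t⁻¹ᵀ * tᵀ = 1 := by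
    rw [← Matrix.transpose_mul, hinv1, Matrix.transpose_one]
  have hassoc : t * (t⁻¹ * w * t⁻¹ᵀ) * tᵀ = (t * t⁻¹) * w * (t⁻¹ᵀ * tᵀ) := by
    simp only [Matrix.mul_assoc]
  have hw_eq : w = t * a * tᵀ := by
    rw [ha, hassoc, hinv1, hinv2, Matrix.one_mul, Matrix.mul_one]
  have hdetw : w.det = a.det * m.det := by
    rw [hw_eq, Matrix.det_mul, Matrix.det_mul, Matrix.det_transpose, hm, Matrix.det_mul,
      Matrix.det_transpose]
    ring
  calc w.det = a.det * m.det := hdetw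
    _ ≤ 1 * m.det := mul_le_mul_of_nonneg_right hdeta (le_of_lt hdm)
    _ = m.det := one_mul _
end
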